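/- arXiv:1310.8532 — 8 statements merged into one kernel-verified Lean document; each statement's English description precedes it below -/
import Mathlib

section
/- The function G is strictly monotonically decreasing on (0,∞): for all 0 < s < t one has G(t) < G(s); in particular G is injective on (0,∞). (Lemma 3(ii)–(iii).) -/
open MeasureTheory Filter Set Topology

/-- The cumulative distribution function `F(t) = ∫₀^t f(γ) dγ`. -/
noncomputable def Fcdf (f : ℝ → ℝ) (t : ℝ) : ℝ := ∫ γ in (0:ℝ)..t, f γ

/-- The average-power function `G(t) = ∫_t^∞ (1/t − 1/γ) f(γ) dγ`. -/
noncomputable def Gfun (f : ℝ → ℝ) (t : ℝ) : ℝ := ∫ γ in Set.Ioi t, (1/t - 1/γ) * f γ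

/-!
For `0 < s < t`,
`G(s) - G(t) = ∫_s^t (1/s - 1/γ) f(γ) dγ + (1/s - 1/t) (1 - F(t))`.
The first term is nonnegative because `γ ≥ s` on the range of integration, and the second is
positive because the distribution has infinite support.
-/

lemma integrableOn_sub_one_div_mul {μ : Measure ℝ} {f : ℝ → ℝ} {S : Set ℝ} {ε : ℝ}
    (hf : IntegrableOn f S μ) (hS : MeasurableSet S) (hε : 0 < ε) (hSε : S ⊆ Ici ε) (c : ℝ) :
    IntegrableOn (fun γ => (c - 1/γ) * f γ) S μ := by
  refine hf.bdd_mul (c := |c| + 1/ε) (by fun_prop) ?_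
  filter_upwards [ae_restrict_mem hS] with γ hγ
  have hεγ : ε ≤ γ := hSε hγ
  have hγ : 0 < γ := hε.trans_le hεγ
  calc ‖c - 1/γ‖ ≤ |c| + |1/γ| := by rw [Real.norm_eq_abs]; exact abs_sub _ _
    _ ≤ |c| + 1/ε := by
      rw [abs_of_pos (one_div_pos.mpr hγ)]
      gcongr

lemma setIntegral_Ioi_eq_one_sub_Fcdf {f : ℝ → ℝ} (hint : IntegrableOn f (Ioi 0))
    (hone : ∫ γ in Ioi (0:ℝ), f γ = 1) {t : ℝ} (ht : 0 ≤ t) :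
    ∫ γ in Ioi t, f γ = 1 - Fcdf f t := by
  rw [← hone, Fcdf, intervalIntegral.integral_of_le ht, ← Ioc_union_Ioi_eq_Ioi ht,
    setIntegral_union (Ioc_disjoint_Ioi le_rfl) measurableSet_Ioi
      (hint.mono_set Ioc_subset_Ioi_self) (hint.mono_set (Ioi_subset_Ioi ht))]
  ring

lemma Gfun_sub_Gfun {f : ℝ → ℝ} (hint : IntegrableOn f (Ioi 0)) {s t : ℝ} (hs : 0 < s)
    (hst : s ≤ t) :
    Gfun f s - Gfun f t = (∫ γ in Ioc s t, (1/s - 1/γ) * f γ)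
      + (1/s - 1/t) * ∫ γ in Ioi t, f γ := by
  have ht : 0 < t := hs.trans_le hst
  have hfIoi : IntegrableOn f (Ioi t) := hint.mono_set (Ioi_subset_Ioi ht.le)
  have hfIoc : IntegrableOn f (Ioc s t) := hint.mono_set (Ioc_subset_Ioi_self.trans
    (Ioi_subset_Ioi hs.le))
  have hIoi (c : ℝ) : IntegrableOn (fun γ => (c - 1/γ) * f γ) (Ioi t) :=
    integrableOn_sub_one_div_mul hfIoi measurableSet_Ioi ht Ioi_subset_Ici_self c
  rw [Gfun, Gfun, ← Ioc_union_Ioi_eq_Ioi hst,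
    setIntegral_union (Ioc_disjoint_Ioi le_rfl) measurableSet_Ioi
      (integrableOn_sub_one_div_mul hfIoc measurableSet_Ioc hs
        (Ioc_subset_Ioi_self.trans Ioi_subset_Ici_self) _) (hIoi _),
    add_sub_assoc, ← integral_sub (hIoi _) (hIoi _), ← integral_const_mul]
  congr 2 with γ
  ring

lemma Gfun_strictAntiOn {f : ℝ → ℝ} (hnn : ∀ x, 0 ≤ f x) (hint : IntegrableOn f (Ioi 0))
    (hone : ∫ γ in Ioi (0:ℝ), f γ = 1) (hsupp : ∀ t > (0:ℝ), Fcdf f t < 1) :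
    StrictAntiOn (Gfun f) (Ioi 0) := by
  intro s hs t ht hst
  have hIoc : 0 ≤ ∫ γ in Ioc s t, (1/s - 1/γ) * f γ :=
    setIntegral_nonneg measurableSet_Ioc fun γ hγ =>
      mul_nonneg (sub_nonneg.mpr (one_div_le_one_div_of_le hs hγ.1.le)) (hnn γ)
  have htail : 0 < (1/s - 1/t) * ∫ γ in Ioi t, f γ := by
    rw [setIntegral_Ioi_eq_one_sub_Fcdf hint hone (le_of_lt ht)]
    exact mul_pos (sub_pos.mpr (one_div_lt_one_div_of_lt hs hst)) (sub_pos.mpr (hsupp t ht))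
  linarith [Gfun_sub_Gfun hint hs hst.le]

theorem G_strictAnti_and_injective_general (f : ℝ → ℝ)
    (hnn : ∀ x, 0 ≤ f x)
    (hint : IntegrableOn f (Set.Ioi (0:ℝ)))
    (hone : ∫ γ in Set.Ioi (0:ℝ), f γ = 1)
    (hsupp : ∀ t > (0:ℝ), Fcdf f t < 1) :
    (∀ s t : ℝ, 0 < s → s < t → Gfun f t < Gfun f s) ∧
      Set.InjOn (Gfun f) (Set.Ioi (0:ℝ)) := by
  have hG := Gfun_strictAntiOn hnn hint hone hsupp
  exact ⟨fun s t hs hst => hG hs (hs.trans hst) hst, hG.injOn⟩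

/-- Lemma 3(ii)–(iii): `G` is strictly decreasing on `(0,∞)`, hence injective there. -/
theorem G_strictAnti_and_injective (f : ℝ → ℝ)
    (hmeas : Measurable f)
    (hnn : ∀ x, 0 ≤ f x)
    (hzero : ∀ x ≤ (0:ℝ), f x = 0)
    (hint : IntegrableOn f (Set.Ioi (0:ℝ)))
    (hone : ∫ γ in Set.Ioi (0:ℝ), f γ = 1)
    (hsupp : ∀ t > (0:ℝ), Fcdf f t < 1) :
    (∀ s t : ℝ, 0 < s → s < t → Gfun f t < Gfun f s) ∧
      Set.InjOn (Gfun f) (Set.Ioi (0:ℝ)) :=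
  G_strictAnti_and_injective_general f hnn hint hone hsupp
end

section
/- Suppose f is continuous on (0,∞) and ∫₁^∞ log(γ) f(γ) dγ < ∞. Then for every λ > 0, I(λ) = λ·G(λ) + ∫_λ^∞ G(u) du. (Integration-by-parts form of the identity I(λ) = ∫₀^{G(λ)} G⁻¹(u) du, equations (E4B71)/(E5A02AB), which expresses the water-filling capacity as C(P̄) = ∫₀^{P̄} G⁻¹(t) dt.) -/
open MeasureTheory Filter Set Topology

/-- The water-filling rate function `I(t) = ∫_t^∞ log(γ/t) f(γ) dγ`. -/
noncomputable def Ifun (f : ℝ → ℝ) (t : ℝ) : ℝ := ∫ γ in Set.Ioi t, Real.log (γ / t) * f γ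

/-!
Fubini on the region `λ < u < γ`: since `∫_λ^γ (1/u - 1/γ) du = log (γ/λ) - (1 - λ/γ)`,
`∫_λ^∞ G(u) du = ∫_λ^∞ (log (γ/λ) - (1 - λ/γ)) f(γ) dγ`, and adding
`λ G(λ) = ∫_λ^∞ (1 - λ/γ) f(γ) dγ` gives `I(λ)`. The kernel `(1/u - 1/γ) f(γ)` is absolutely
integrable on the region because `f` and `log γ · f(γ)` are integrable on `(λ, ∞)`.
-/

open Real

section

variable {f : ℝ → ℝ} {a : ℝ}

lemma integrableOn_inv_mul_Ioi (hf : IntegrableOn f (Ioi a)) (ha : 0 < a) :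
    IntegrableOn (fun x => x⁻¹ * f x) (Ioi a) := by
  refine hf.bdd_mul (c := a⁻¹) measurable_inv.aestronglyMeasurable ?_
  filter_upwards [self_mem_ae_restrict measurableSet_Ioi] with x hx
  rw [norm_inv, Real.norm_of_nonneg (ha.trans hx).le]
  exact inv_anti₀ ha hx.le

lemma integrableOn_log_mul_Ioi {b : ℝ} (hf : IntegrableOn f (Ioi a))
    (hlog : IntegrableOn (fun x => log x * f x) (Ioi b)) (ha : 0 < a) :
    IntegrableOn (fun x => log x * f x) (Ioi a) := by
  rw [← Ioc_union_Ioi_eq_Ioi (le_max_left a b)]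
  refine IntegrableOn.union ?_ (hlog.mono_set (Ioi_subset_Ioi (le_max_right a b)))
  have hf' : IntegrableOn f (Icc a (max a b)) := by
    rw [integrableOn_Icc_iff_integrableOn_Ioc]
    exact hf.mono_set Ioc_subset_Ioi_self
  have hcont : ContinuousOn log (Icc a (max a b)) :=
    continuousOn_log.mono fun x hx => (ha.trans_le hx.1).ne'
  exact (hf'.continuousOn_mul hcont isCompact_Icc).mono_set Ioc_subset_Icc_self

lemma integrableOn_log_mul_norm {s : Set ℝ} (hf : IntegrableOn f s)
    (hlog : IntegrableOn (fun x => log x * f x) s) :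
    IntegrableOn (fun x => log x * ‖f x‖) s := by
  refine Integrable.mono hlog (measurable_log.aestronglyMeasurable.mul hf.1.norm)
    (ae_of_all _ fun x => ?_)
  simp

end

lemma integral_one_div_sub_one_div {a b : ℝ} (ha : 0 < a) (hb : 0 < b) :
    ∫ u in a..b, (1/u - 1/b) = log (b/a) - (1 - a/b) := by
  have h0 : (0:ℝ) ∉ uIcc a b := fun h => (lt_min ha hb).not_ge h.1
  have hinv : IntervalIntegrable (fun u : ℝ => 1/u) volume a b :=
    (continuousOn_const.div continuousOn_id fun _ hx =>
      ne_of_mem_of_not_mem hx h0).intervalIntegrable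
  rw [intervalIntegral.integral_sub hinv intervalIntegrable_const, integral_one_div h0,
    intervalIntegral.integral_const, smul_eq_mul]
  field_simp

noncomputable def Gkernel (f : ℝ → ℝ) (u γ : ℝ) : ℝ := if u < γ then (1/u - 1/γ) * f γ else 0

section

variable {f : ℝ → ℝ} {lam : ℝ}

lemma Gkernel_eq_indicator_Ioi (u : ℝ) :
    Gkernel f u = (Ioi u).indicator fun γ => (1/u - 1/γ) * f γ := by
  ext γ; simp [Gkernel, indicator]

lemma Gkernel_eq_indicator_Iio (γ : ℝ) :
    (fun u => Gkernel f u γ) = (Iio γ).indicator fun u => (1/u - 1/γ) * f γ := by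
  ext u; simp [Gkernel, indicator]

lemma norm_Gkernel {u : ℝ} (hu : 0 < u) (γ : ℝ) :
    ‖Gkernel f u γ‖ = Gkernel (fun x => ‖f x‖) u γ := by
  unfold Gkernel
  split_ifs with h
  · rw [norm_mul, Real.norm_of_nonneg (sub_nonneg.2 (one_div_le_one_div_of_le hu h.le))]
  · exact norm_zero

lemma Gfun_eq_integral_Gkernel {u : ℝ} (hu : lam ≤ u) :
    Gfun f u = ∫ γ in Ioi lam, Gkernel f u γ := by
  rw [Gkernel_eq_indicator_Ioi, setIntegral_indicator measurableSet_Ioi, Ioi_inter_Ioi,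
    max_eq_right hu, Gfun]

lemma integral_Gkernel_eq {γ : ℝ} (hlam : 0 < lam) (hγ : lam < γ) :
    ∫ u in Ioi lam, Gkernel f u γ = (log (γ/lam) - (1 - lam/γ)) * f γ := by
  rw [Gkernel_eq_indicator_Iio, setIntegral_indicator measurableSet_Iio, Ioi_inter_Iio,
    ← integral_Ioc_eq_integral_Ioo, ← intervalIntegral.integral_of_le hγ.le,
    intervalIntegral.integral_mul_const, integral_one_div_sub_one_div hlam (hlam.trans hγ)]

lemma integrableOn_Gkernel_Ioi {γ : ℝ} (hlam : 0 < lam) :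
    IntegrableOn (fun u => Gkernel f u γ) (Ioi lam) := by
  rw [IntegrableOn, Gkernel_eq_indicator_Iio, integrable_indicator_iff measurableSet_Iio,
    IntegrableOn, Measure.restrict_restrict measurableSet_Iio, Iio_inter_Ioi]
  refine (ContinuousOn.integrableOn_Icc ?_).mono_set Ioo_subset_Icc_self
  exact ((continuousOn_const.div continuousOn_id fun x hx => (hlam.trans_le hx.1).ne').sub
    continuousOn_const).mul continuousOn_const

lemma integrableOn_log_div_sub_one_sub_div_mul (hf : IntegrableOn f (Ioi lam))
    (hlog : IntegrableOn (fun x => log x * f x) (Ioi lam)) (hlam : 0 < lam) :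
    IntegrableOn (fun γ => (log (γ/lam) - (1 - lam/γ)) * f γ) (Ioi lam) := by
  refine ((hlog.sub (hf.const_mul (log lam + 1))).add
    ((integrableOn_inv_mul_Ioi hf hlam).const_mul lam)).congr_fun (fun γ hγ => ?_)
    measurableSet_Ioi
  rw [log_div (hlam.trans hγ).ne' hlam.ne']
  simp only [Pi.add_apply, Pi.sub_apply]
  ring

lemma integrableOn_one_sub_div_mul (hf : IntegrableOn f (Ioi lam)) (hlam : 0 < lam) :
    IntegrableOn (fun γ => (1 - lam/γ) * f γ) (Ioi lam) := by
  refine (hf.sub ((integrableOn_inv_mul_Ioi hf hlam).const_mul lam)).congr_fun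
    (fun γ _ => ?_) measurableSet_Ioi
  simp only [Pi.sub_apply]
  ring

lemma integrable_Gkernel (hf : IntegrableOn f (Ioi lam))
    (hlog : IntegrableOn (fun x => log x * f x) (Ioi lam)) (hlam : 0 < lam) :
    Integrable (Function.uncurry (Gkernel f))
      ((volume.restrict (Ioi lam)).prod (volume.restrict (Ioi lam))) := by
  have hmeas : AEStronglyMeasurable (Function.uncurry (Gkernel f))
      ((volume.restrict (Ioi lam)).prod (volume.restrict (Ioi lam))) := by
    have : Function.uncurry (Gkernel f)
        = {p : ℝ × ℝ | p.1 < p.2}.indicator fun p => (1/p.1 - 1/p.2) * f p.2 := by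
      ext ⟨u, γ⟩; simp [Gkernel, indicator]
    rw [this]
    refine AEStronglyMeasurable.indicator ?_ (measurableSet_lt measurable_fst measurable_snd)
    exact (by fun_prop : Measurable fun p : ℝ × ℝ => 1/p.1 - 1/p.2).aestronglyMeasurable.mul
      hf.1.comp_snd
  refine (integrable_prod_iff' hmeas).2 ⟨ae_of_all _ fun γ => integrableOn_Gkernel_Ioi hlam, ?_⟩
  refine (integrableOn_log_div_sub_one_sub_div_mul hf.norm
    (integrableOn_log_mul_norm hf hlog) hlam).congr ?_
  filter_upwards [self_mem_ae_restrict measurableSet_Ioi] with γ hγ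
  simp only [Function.uncurry_apply_pair]
  rw [← integral_Gkernel_eq (f := fun x => ‖f x‖) hlam hγ]
  exact setIntegral_congr_fun measurableSet_Ioi fun u hu => (norm_Gkernel (hlam.trans hu) γ).symm

lemma integral_Gfun_Ioi (hf : IntegrableOn f (Ioi lam))
    (hlog : IntegrableOn (fun x => log x * f x) (Ioi lam)) (hlam : 0 < lam) :
    ∫ u in Ioi lam, Gfun f u = ∫ γ in Ioi lam, (log (γ/lam) - (1 - lam/γ)) * f γ :=
  calc ∫ u in Ioi lam, Gfun f u
      = ∫ u in Ioi lam, ∫ γ in Ioi lam, Gkernel f u γ :=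
        setIntegral_congr_fun measurableSet_Ioi fun _ hu => Gfun_eq_integral_Gkernel hu.le
    _ = ∫ γ in Ioi lam, ∫ u in Ioi lam, Gkernel f u γ :=
        integral_integral_swap (integrable_Gkernel hf hlog hlam)
    _ = ∫ γ in Ioi lam, (log (γ/lam) - (1 - lam/γ)) * f γ :=
        setIntegral_congr_fun measurableSet_Ioi fun _ hγ => integral_Gkernel_eq hlam hγ

lemma mul_Gfun (hlam : lam ≠ 0) :
    lam * Gfun f lam = ∫ γ in Ioi lam, (1 - lam/γ) * f γ := by
  rw [Gfun, ← integral_const_mul]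
  refine integral_congr_ae (ae_of_all _ fun γ => ?_)
  field_simp

end

theorem I_eq_lam_mul_G_add_integral_G_general (f : ℝ → ℝ)
    (hint : IntegrableOn f (Set.Ioi (0:ℝ)))
    (hlog : IntegrableOn (fun γ => Real.log γ * f γ) (Set.Ioi (1:ℝ))) :
    ∀ lam > (0:ℝ),
      Ifun f lam = lam * Gfun f lam + ∫ u in Set.Ioi lam, Gfun f u := by
  intro lam hlam
  have hf : IntegrableOn f (Ioi lam) := hint.mono_set (Ioi_subset_Ioi hlam.le)
  have hlog' := integrableOn_log_mul_Ioi hf hlog hlam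
  rw [mul_Gfun hlam.ne', integral_Gfun_Ioi hf hlog' hlam, ← integral_add
    (integrableOn_one_sub_div_mul hf hlam) (integrableOn_log_div_sub_one_sub_div_mul hf hlog' hlam)]
  exact integral_congr_ae (ae_of_all _ fun γ => by ring)

/-- Integration-by-parts form of (E4B71)/(E5A02AB):
`I(λ) = λ·G(λ) + ∫_λ^∞ G(u) du` for every `λ > 0`. -/
theorem I_eq_lam_mul_G_add_integral_G (f : ℝ → ℝ)
    (hnn : ∀ x, 0 ≤ f x)
    (hzero : ∀ x ≤ (0:ℝ), f x = 0)
    (hcont : ContinuousOn f (Set.Ioi (0:ℝ)))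
    (hint : IntegrableOn f (Set.Ioi (0:ℝ)))
    (hone : ∫ γ in Set.Ioi (0:ℝ), f γ = 1)
    (hsupp : ∀ t > (0:ℝ), Fcdf f t < 1)
    (hlog : IntegrableOn (fun γ => Real.log γ * f γ) (Set.Ioi (1:ℝ))) :
    ∀ lam > (0:ℝ),
      Ifun f lam = lam * Gfun f lam + ∫ u in Set.Ioi lam, Gfun f u :=
  I_eq_lam_mul_G_add_integral_G_general f hint hlog
end

section
/- Suppose f is continuous on (0,∞), ∫₁^∞ log(γ) f(γ) dγ < ∞, and t·f(t)/(1 − F(t)) → l as t → ∞ with 0 < l < ∞. Then I(λ)/(λ·G(λ)) → 1 + 1/l as λ → ∞. In other words, the ergodic capacity with perfect transmitter and receiver channel state information satisfies C(P̄) ≈ (1 + 1/l)·λ(P̄)·P̄ at asymptotically low average power P̄, where λ(P̄) is the water level with G(λ(P̄)) = P̄. (Theorem 2, capacity formula, finite-l case.) -/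
open MeasureTheory Filter Set Topology

/-! Write `T(t) = ∫_t^∞ f = 1 − F(t)`. Splitting the logarithm and `1/t − 1/γ` expresses `I` and
`G` through tail integrals, whence `I' = −T/λ` and `G' = −T/λ²`, while `I`, `G`, `T` all vanish
at infinity. L'Hôpital's rule then gives `I/T → 1/l`, since `I'/T' = T/(λ f)`, and
`G/(T/λ) → 1/(1 + l)`, since `G'/(T/λ)' = T/(T + λ f)`; the quotient of the two limits is
`(1 + l)/l`. -/

noncomputable def tailIntegral (g : ℝ → ℝ) (t : ℝ) : ℝ := ∫ γ in Ioi t, g γ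

section TailIntegral

variable {g : ℝ → ℝ} {c x : ℝ}

lemma tailIntegral_eq_sub_intervalIntegral (hg : IntegrableOn g (Ioi c)) (hx : c ≤ x) :
    tailIntegral g x = tailIntegral g c - ∫ γ in c..x, g γ := by
  rw [tailIntegral, tailIntegral, ← intervalIntegral.integral_Ioi_sub_Ioi hg hx, sub_sub_cancel]

lemma tendsto_tailIntegral_atTop (hg : IntegrableOn g (Ioi c)) :
    Tendsto (tailIntegral g) atTop (𝓝 0) := by
  have h := (intervalIntegral_tendsto_integral_Ioi c hg tendsto_id).const_sub (tailIntegral g c)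
  rw [tailIntegral, sub_self] at h
  refine h.congr' ?_
  filter_upwards [eventually_ge_atTop c] with t ht
  exact (tailIntegral_eq_sub_intervalIntegral hg ht).symm

lemma hasDerivAt_tailIntegral (hg : IntegrableOn g (Ioi c)) (hgx : ContinuousAt g x)
    (hx : c < x) : HasDerivAt (tailIntegral g) (-g x) x := by
  have hint : HasDerivAt (fun t => ∫ γ in c..t, g γ) (g x) x :=
    intervalIntegral.integral_hasDerivAt_right
      ((intervalIntegrable_iff_integrableOn_Ioc_of_le hx.le).2 (hg.mono_set Ioc_subset_Ioi_self))
      ⟨Ioi c, Ioi_mem_nhds hx, hg.aestronglyMeasurable⟩ hgx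
  refine (hint.const_sub (tailIntegral g c)).congr_of_eventuallyEq ?_
  filter_upwards [eventually_gt_nhds hx] with t ht
  exact tailIntegral_eq_sub_intervalIntegral hg ht.le

lemma MeasureTheory.IntegrableOn.div_id_Ioi (hc : 0 < c) (hg : IntegrableOn g (Ioi c)) :
    IntegrableOn (fun γ => g γ / γ) (Ioi c) := by
  simp only [div_eq_mul_inv]
  refine hg.mul_bdd measurable_inv.aestronglyMeasurable (c := c⁻¹) ?_
  filter_upwards [ae_restrict_mem measurableSet_Ioi] with γ (hγ : c < γ)
  rw [norm_inv, Real.norm_of_nonneg (hc.trans hγ).le]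
  exact inv_anti₀ hc hγ.le

end TailIntegral

section WaterFilling

open Real

variable {f : ℝ → ℝ} {c x : ℝ}

lemma Ifun_eq_tailIntegral (hx : 0 < x) (hf : IntegrableOn f (Ioi x))
    (hlog : IntegrableOn (fun γ => log γ * f γ) (Ioi x)) :
    Ifun f x = tailIntegral (fun γ => log γ * f γ) x - log x * tailIntegral f x := by
  have hsplit : ∀ γ ∈ Ioi x, log (γ / x) * f γ = log γ * f γ - log x * f γ := fun γ hγ => by
    rw [log_div (hx.trans hγ).ne' hx.ne']
    ring
  rw [Ifun, setIntegral_congr_fun measurableSet_Ioi hsplit, integral_sub hlog (hf.const_mul _),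
    integral_const_mul, tailIntegral, tailIntegral]

lemma Gfun_eq_tailIntegral (hx : 0 < x) (hf : IntegrableOn f (Ioi x)) :
    Gfun f x = tailIntegral f x / x - tailIntegral (fun γ => f γ / γ) x := by
  have hsplit : ∀ γ ∈ Ioi x, (1 / x - 1 / γ) * f γ = x⁻¹ * f γ - f γ / γ := fun γ _ => by
    ring
  rw [Gfun, setIntegral_congr_fun measurableSet_Ioi hsplit,
    integral_sub (hf.const_mul _) (hf.div_id_Ioi hx), integral_const_mul, tailIntegral,
    tailIntegral, inv_mul_eq_div]

lemma hasDerivAt_Ifun (hc : 0 < c) (hx : c < x) (hf : IntegrableOn f (Ioi c))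
    (hlog : IntegrableOn (fun γ => log γ * f γ) (Ioi c)) (hfx : ContinuousAt f x) :
    HasDerivAt (Ifun f) (-tailIntegral f x / x) x := by
  have hx0 : x ≠ 0 := (hc.trans hx).ne'
  have hd := (hasDerivAt_tailIntegral hlog ((continuousAt_log hx0).mul hfx) hx).sub
    ((hasDerivAt_log hx0).mul (hasDerivAt_tailIntegral hf hfx hx))
  refine (hd.congr_of_eventuallyEq ?_).congr_deriv (by field_simp; ring)
  filter_upwards [eventually_gt_nhds hx] with t ht
  exact Ifun_eq_tailIntegral (hc.trans ht) (hf.mono_set (Ioi_subset_Ioi ht.le))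
    (hlog.mono_set (Ioi_subset_Ioi ht.le))

lemma hasDerivAt_Gfun (hc : 0 < c) (hx : c < x) (hf : IntegrableOn f (Ioi c))
    (hfx : ContinuousAt f x) :
    HasDerivAt (Gfun f) (-tailIntegral f x / x ^ 2) x := by
  have hx0 : x ≠ 0 := (hc.trans hx).ne'
  have hd := ((hasDerivAt_tailIntegral hf hfx hx).div (hasDerivAt_id' x) hx0).sub
    (hasDerivAt_tailIntegral (hf.div_id_Ioi hc) (hfx.div (continuousAt_id' x) hx0) hx)
  refine (hd.congr_of_eventuallyEq ?_).congr_deriv (by field_simp; ring)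
  filter_upwards [eventually_gt_nhds hx] with t ht
  exact Gfun_eq_tailIntegral (hc.trans ht) (hf.mono_set (Ioi_subset_Ioi ht.le))

lemma tendsto_Gfun_atTop (hc : 0 < c) (hf : IntegrableOn f (Ioi c)) :
    Tendsto (Gfun f) atTop (𝓝 0) := by
  have h := ((tendsto_tailIntegral_atTop hf).div_atTop tendsto_id).sub
    (tendsto_tailIntegral_atTop (hf.div_id_Ioi hc))
  rw [sub_zero] at h
  refine h.congr' ?_
  filter_upwards [eventually_gt_atTop c] with x hx
  exact (Gfun_eq_tailIntegral (hc.trans hx) (hf.mono_set (Ioi_subset_Ioi hx.le))).symm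

lemma tendsto_Ifun_atTop (hnn : ∀ x, 0 ≤ f x)
    (hlog : IntegrableOn (fun γ => log γ * f γ) (Ioi c)) :
    Tendsto (Ifun f) atTop (𝓝 0) := by
  refine tendsto_of_tendsto_of_tendsto_of_le_of_le' tendsto_const_nhds
    (tendsto_tailIntegral_atTop hlog) ?_ ?_
  all_goals filter_upwards [eventually_ge_atTop 1, eventually_ge_atTop c] with x hx1 hxc
  all_goals have hx : 0 < x := one_pos.trans_le hx1
  · refine setIntegral_nonneg measurableSet_Ioi fun γ (hγ : x < γ) => ?_
    exact mul_nonneg (log_nonneg ((one_le_div hx).2 hγ.le)) (hnn γ)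
  · refine integral_mono_of_nonneg ?_ (hlog.mono_set (Ioi_subset_Ioi hxc)) ?_
    all_goals filter_upwards [ae_restrict_mem measurableSet_Ioi] with γ (hγ : x < γ)
    · exact mul_nonneg (log_nonneg ((one_le_div hx).2 hγ.le)) (hnn γ)
    · rw [log_div (hx.trans hγ).ne' hx.ne']
      nlinarith [log_nonneg hx1, hnn γ]

end WaterFilling

section GeneralizedFailureRate

open Real

variable {f : ℝ → ℝ} {c l : ℝ}

lemma eventually_pos_of_tendsto_failureRate (hnn : ∀ x, 0 ≤ f x) (hl : 0 < l)
    (hGFR : Tendsto (fun t => t * f t / tailIntegral f t) atTop (𝓝 l)) :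
    ∀ᶠ t in atTop, 0 < t ∧ 0 < f t ∧ 0 < tailIntegral f t := by
  filter_upwards [eventually_gt_atTop 0, hGFR.eventually (eventually_gt_nhds hl)] with t ht hrate
  rcases div_pos_iff.1 hrate with ⟨hnum, hden⟩ | ⟨hnum, -⟩
  · exact ⟨ht, pos_of_mul_pos_right hnum ht.le, hden⟩
  · exact absurd hnum (mul_nonneg ht.le (hnn t)).not_gt

lemma tendsto_Ifun_div_tailIntegral (hc : 0 < c) (hnn : ∀ x, 0 ≤ f x)
    (hf : IntegrableOn f (Ioi c)) (hcont : ContinuousOn f (Ioi c))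
    (hlog : IntegrableOn (fun γ => log γ * f γ) (Ioi c)) (hl : 0 < l)
    (hGFR : Tendsto (fun t => t * f t / tailIntegral f t) atTop (𝓝 l)) :
    Tendsto (fun x => Ifun f x / tailIntegral f x) atTop (𝓝 l⁻¹) := by
  have hpos := eventually_pos_of_tendsto_failureRate hnn hl hGFR
  refine HasDerivAt.lhopital_zero_atTop (f' := fun x => -tailIntegral f x / x)
    (g' := fun x => -f x) ?_ ?_ ?_ (tendsto_Ifun_atTop hnn hlog) (tendsto_tailIntegral_atTop hf)
    ((hGFR.inv₀ hl.ne').congr' ?_)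
  all_goals filter_upwards [hpos, eventually_gt_atTop c] with x ⟨hx, hfx, hTx⟩ hxc
  · exact hasDerivAt_Ifun hc hxc hf hlog (hcont.continuousAt (Ioi_mem_nhds hxc))
  · exact hasDerivAt_tailIntegral hf (hcont.continuousAt (Ioi_mem_nhds hxc)) hxc
  · exact neg_ne_zero.2 hfx.ne'
  · field_simp

lemma tendsto_Gfun_div_tailIntegral (hc : 0 < c) (hnn : ∀ x, 0 ≤ f x)
    (hf : IntegrableOn f (Ioi c)) (hcont : ContinuousOn f (Ioi c)) (hl : 0 < l)
    (hGFR : Tendsto (fun t => t * f t / tailIntegral f t) atTop (𝓝 l)) :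
    Tendsto (fun x => Gfun f x / (tailIntegral f x / x)) atTop (𝓝 (1 + l)⁻¹) := by
  have hpos := eventually_pos_of_tendsto_failureRate hnn hl hGFR
  refine HasDerivAt.lhopital_zero_atTop (f' := fun x => -tailIntegral f x / x ^ 2)
    (g' := fun x => (-f x * x - tailIntegral f x * 1) / x ^ 2) ?_ ?_ ?_
    (tendsto_Gfun_atTop hc hf) ((tendsto_tailIntegral_atTop hf).div_atTop tendsto_id)
    (((tendsto_const_nhds.add hGFR).inv₀ (by positivity)).congr' ?_)
  all_goals filter_upwards [hpos, eventually_gt_atTop c] with x ⟨hx, hfx, hTx⟩ hxc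
  · exact hasDerivAt_Gfun hc hxc hf (hcont.continuousAt (Ioi_mem_nhds hxc))
  · exact (hasDerivAt_tailIntegral hf (hcont.continuousAt (Ioi_mem_nhds hxc)) hxc).div
      (hasDerivAt_id' x) hx.ne'
  · exact div_ne_zero (by nlinarith) (by positivity)
  · have hsum : tailIntegral f x + x * f x ≠ 0 := by positivity
    rw [show -f x * x - tailIntegral f x * 1 = -(tailIntegral f x + x * f x) by ring]
    field_simp

end GeneralizedFailureRate

lemma tailIntegral_eq_one_sub_Fcdf {f : ℝ → ℝ} (hint : IntegrableOn f (Ioi 0))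
    (hone : ∫ γ in Ioi (0:ℝ), f γ = 1) {t : ℝ} (ht : 0 ≤ t) :
    tailIntegral f t = 1 - Fcdf f t := by
  rw [tailIntegral_eq_sub_intervalIntegral hint ht, tailIntegral, hone, Fcdf]

theorem capacity_asymptotics_GFR_finite_general (f : ℝ → ℝ) (l : ℝ)
    (hnn : ∀ x, 0 ≤ f x)
    (hcont : ContinuousOn f (Set.Ioi (0:ℝ)))
    (hint : IntegrableOn f (Set.Ioi (0:ℝ)))
    (hone : ∫ γ in Set.Ioi (0:ℝ), f γ = 1)
    (hlog : IntegrableOn (fun γ => Real.log γ * f γ) (Set.Ioi (1:ℝ)))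
    (hl : 0 < l)
    (hGFR : Tendsto (fun t => t * f t / (1 - Fcdf f t)) atTop (nhds l)) :
    Tendsto (fun lam => Ifun f lam / (lam * Gfun f lam)) atTop (nhds (1 + 1 / l)) := by
  have hf : IntegrableOn f (Ioi 1) := hint.mono_set (Ioi_subset_Ioi zero_le_one)
  have hcont₁ : ContinuousOn f (Ioi 1) := hcont.mono (Ioi_subset_Ioi zero_le_one)
  have hrate : Tendsto (fun t => t * f t / tailIntegral f t) atTop (𝓝 l) := by
    refine hGFR.congr' ?_
    filter_upwards [eventually_ge_atTop 0] with t ht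
    rw [tailIntegral_eq_one_sub_Fcdf hint hone ht]
  have hI := tendsto_Ifun_div_tailIntegral one_pos hnn hf hcont₁ hlog hl hrate
  have hG := tendsto_Gfun_div_tailIntegral one_pos hnn hf hcont₁ hl hrate
  have hlim : l⁻¹ / (1 + l)⁻¹ = 1 + 1 / l := by
    field_simp
    ring
  rw [← hlim]
  refine (hI.div hG (by positivity)).congr' ?_
  filter_upwards [eventually_pos_of_tendsto_failureRate hnn hl hrate] with x ⟨_, _, hT⟩
  rw [Pi.div_apply, div_div_eq_mul_div, div_mul_div_cancel₀ hT.ne', div_div]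

/-- Theorem 2 (capacity formula, finite-`l` case): if the generalized failure rate
tends to `l ∈ (0,∞)`, then `I(λ)/(λ·G(λ)) → 1 + 1/l` as `λ → ∞`, i.e. the ergodic
capacity satisfies `C(P̄) ≈ (1 + 1/l)·λ(P̄)·P̄` at asymptotically low power. -/
theorem capacity_asymptotics_GFR_finite (f : ℝ → ℝ) (l : ℝ)
    (hnn : ∀ x, 0 ≤ f x)
    (hzero : ∀ x ≤ (0:ℝ), f x = 0)
    (hcont : ContinuousOn f (Set.Ioi (0:ℝ)))
    (hint : IntegrableOn f (Set.Ioi (0:ℝ)))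
    (hone : ∫ γ in Set.Ioi (0:ℝ), f γ = 1)
    (hsupp : ∀ t > (0:ℝ), Fcdf f t < 1)
    (hlog : IntegrableOn (fun γ => Real.log γ * f γ) (Set.Ioi (1:ℝ)))
    (hl : 0 < l)
    (hGFR : Tendsto (fun t => t * f t / (1 - Fcdf f t)) atTop (nhds l)) :
    Tendsto (fun lam => Ifun f lam / (lam * Gfun f lam)) atTop (nhds (1 + 1 / l)) :=
  capacity_asymptotics_GFR_finite_general f l hnn hcont hint hone hlog hl hGFR
end

section
/- Suppose f is continuous on (0,∞), ∫₁^∞ log(γ) f(γ) dγ < ∞, and t·f(t)/(1 − F(t)) → ∞ as t → ∞. Then I(λ)/(λ·G(λ)) → 1 as λ → ∞; i.e. the ergodic capacity satisfies C(P̄) ≈ λ(P̄)·P̄ at asymptotically low average power, where λ(P̄) is the water level with G(λ(P̄)) = P̄. (Theorem 2, capacity formula, l = ∞ case, covering Rayleigh, Rician and Nakagami fading.) -/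
open MeasureTheory Filter Set Topology

/-!
Write `T(t) = ∫_t^∞ f`, `B(t) = ∫_t^∞ f/γ` and `A(t) = ∫_t^∞ f log γ` (`tailMass`,
`tailInvMoment`, `tailLogMoment`). Then
`I(t) = A(t) - T(t) log t` and `t G(t) = T(t) - t B(t)` both tend to `0`, with derivatives
`-T(t)/t` and `-B(t)`, so by L'Hôpital it suffices that `T/(tB) = 1/(1 - tG/T) → 1`, i.e.
`tG(t) = o(T(t))`. If `M T ≤ t f` on `[t₁, ∞)`, then `T/M - tG` has derivative
`B - f/M ≤ T/t - f/M ≤ 0` there and tends to `0`, hence is nonnegative: `tG ≤ T/M`.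
-/

theorem hasDerivAt_integral_Ioi {g : ℝ → ℝ} {c t : ℝ} (hg : IntegrableOn g (Ioi c))
    (hcont : ContinuousOn g (Ioi c)) (ht : c < t) :
    HasDerivAt (fun u => ∫ x in Ioi u, g x) (-g t) t := by
  have hmem : Ioi c ∈ 𝓝 t := Ioi_mem_nhds ht
  have hct : IntervalIntegrable g volume c t :=
    (intervalIntegrable_iff_integrableOn_Ioc_of_le ht.le).2 (hg.mono_set Ioc_subset_Ioi_self)
  have hprim := (intervalIntegral.integral_hasDerivAt_right hct
    (hcont.stronglyMeasurableAtFilter isOpen_Ioi t ht) (hcont.continuousAt hmem)).const_sub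
    (∫ x in Ioi c, g x)
  refine hprim.congr_of_eventuallyEq ?_
  filter_upwards [hmem] with u hu
  rw [← intervalIntegral.integral_Ioi_sub_Ioi hg (le_of_lt hu), sub_sub_cancel]

theorem integrableOn_Ioi_inv_mul {f : ℝ → ℝ} {c : ℝ} (hf : IntegrableOn f (Ioi c)) (hc : 0 < c) :
    IntegrableOn (fun γ => γ⁻¹ * f γ) (Ioi c) := by
  refine hf.bdd_mul (c := c⁻¹) measurable_inv.aestronglyMeasurable ?_
  filter_upwards [ae_restrict_mem measurableSet_Ioi] with γ hγ
  rw [norm_inv, Real.norm_of_nonneg (hc.trans hγ).le]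
  exact inv_anti₀ hc (le_of_lt hγ)

noncomputable def tailMass (f : ℝ → ℝ) (t : ℝ) : ℝ := ∫ γ in Ioi t, f γ

noncomputable def tailInvMoment (f : ℝ → ℝ) (t : ℝ) : ℝ := ∫ γ in Ioi t, γ⁻¹ * f γ

noncomputable def tailLogMoment (f : ℝ → ℝ) (t : ℝ) : ℝ := ∫ γ in Ioi t, Real.log γ * f γ

theorem tendsto_tailMass_atTop_zero (f : ℝ → ℝ) : Tendsto (tailMass f) atTop (𝓝 0) :=
  tendsto_integral_Ioi_zero tendsto_id

theorem tendsto_tailLogMoment_atTop_zero (f : ℝ → ℝ) : Tendsto (tailLogMoment f) atTop (𝓝 0) :=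
  tendsto_integral_Ioi_zero tendsto_id

section TailIntegrals

variable {f : ℝ → ℝ} {t : ℝ}

theorem tailMass_eq_one_sub_Fcdf (hint : IntegrableOn f (Ioi 0)) (hone : ∫ γ in Ioi 0, f γ = 1)
    (ht : 0 ≤ t) : tailMass f t = 1 - Fcdf f t := by
  rw [Fcdf, ← intervalIntegral.integral_Ioi_sub_Ioi hint ht, hone, tailMass, sub_sub_cancel]

theorem Ifun_eq_tailLogMoment_sub (hf : IntegrableOn f (Ioi t))
    (hlog : IntegrableOn (fun γ => Real.log γ * f γ) (Ioi t)) (ht : 0 < t) :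
    Ifun f t = tailLogMoment f t - Real.log t * tailMass f t := by
  rw [tailLogMoment, tailMass, ← integral_const_mul, ← integral_sub hlog (hf.const_mul _)]
  refine setIntegral_congr_fun measurableSet_Ioi fun γ hγ => ?_
  rw [Real.log_div (ht.trans hγ).ne' ht.ne']
  ring

theorem mul_Gfun_eq_tailMass_sub (hf : IntegrableOn f (Ioi t)) (ht : 0 < t) :
    t * Gfun f t = tailMass f t - t * tailInvMoment f t := by
  rw [tailMass, tailInvMoment, ← integral_const_mul,
    ← integral_sub hf ((integrableOn_Ioi_inv_mul hf ht).const_mul _), Gfun, ← integral_const_mul]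
  refine setIntegral_congr_fun measurableSet_Ioi fun γ _ => ?_
  field_simp

theorem hasDerivAt_tailMass (hint : IntegrableOn f (Ioi 0)) (hcont : ContinuousOn f (Ioi 0))
    (ht : 0 < t) : HasDerivAt (tailMass f) (-f t) t :=
  hasDerivAt_integral_Ioi hint hcont ht

theorem hasDerivAt_tailInvMoment (hint : IntegrableOn f (Ioi 0)) (hcont : ContinuousOn f (Ioi 0))
    (ht : 0 < t) : HasDerivAt (tailInvMoment f) (-(t⁻¹ * f t)) t := by
  have ht2 : 0 < t / 2 := half_pos ht
  refine hasDerivAt_integral_Ioi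
    (integrableOn_Ioi_inv_mul (hint.mono_set (Ioi_subset_Ioi ht2.le)) ht2) ?_ (half_lt_self ht)
  exact (continuousOn_inv₀.mono fun γ hγ => (ht2.trans hγ).ne').mul
    (hcont.mono (Ioi_subset_Ioi ht2.le))

theorem hasDerivAt_tailLogMoment (hcont : ContinuousOn f (Ioi 0))
    (hlog : IntegrableOn (fun γ => Real.log γ * f γ) (Ioi 1)) (ht : 1 < t) :
    HasDerivAt (tailLogMoment f) (-(Real.log t * f t)) t := by
  refine hasDerivAt_integral_Ioi hlog ?_ ht
  exact ((Real.continuousOn_log.mono fun γ hγ => (one_pos.trans hγ).ne').mul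
    (hcont.mono (Ioi_subset_Ioi zero_le_one)))

theorem hasDerivAt_Ifun_s9 (hint : IntegrableOn f (Ioi 0)) (hcont : ContinuousOn f (Ioi 0))
    (hlog : IntegrableOn (fun γ => Real.log γ * f γ) (Ioi 1)) (ht : 1 < t) :
    HasDerivAt (Ifun f) (-(tailMass f t / t)) t := by
  have ht0 : 0 < t := one_pos.trans ht
  have hderiv := (hasDerivAt_tailLogMoment hcont hlog ht).sub
    ((Real.hasDerivAt_log ht0.ne').mul (hasDerivAt_tailMass hint hcont ht0))
  refine (hderiv.congr_of_eventuallyEq ?_).congr_deriv (by field_simp; ring)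
  filter_upwards [Ioi_mem_nhds ht] with u hu
  exact Ifun_eq_tailLogMoment_sub (hint.mono_set (Ioi_subset_Ioi (zero_le_one.trans hu.le)))
    (hlog.mono_set (Ioi_subset_Ioi hu.le)) (one_pos.trans hu)

theorem hasDerivAt_mul_Gfun (hint : IntegrableOn f (Ioi 0)) (hcont : ContinuousOn f (Ioi 0))
    (ht : 0 < t) : HasDerivAt (fun u => u * Gfun f u) (-tailInvMoment f t) t := by
  have hderiv := (hasDerivAt_tailMass hint hcont ht).sub
    ((hasDerivAt_id t).mul (hasDerivAt_tailInvMoment hint hcont ht))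
  refine (hderiv.congr_of_eventuallyEq ?_).congr_deriv (by simp only [id]; field_simp; ring)
  filter_upwards [Ioi_mem_nhds ht] with u hu
  exact mul_Gfun_eq_tailMass_sub (hint.mono_set (Ioi_subset_Ioi (le_of_lt hu))) hu

theorem tailMass_nonneg (hnn : ∀ x, 0 ≤ f x) : 0 ≤ tailMass f t :=
  setIntegral_nonneg measurableSet_Ioi fun γ _ => hnn γ

theorem tailInvMoment_nonneg (hnn : ∀ x, 0 ≤ f x) (ht : 0 ≤ t) : 0 ≤ tailInvMoment f t :=
  setIntegral_nonneg measurableSet_Ioi fun γ hγ =>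
    mul_nonneg (inv_nonneg.2 (ht.trans (le_of_lt hγ))) (hnn γ)

theorem tailInvMoment_le (hnn : ∀ x, 0 ≤ f x) (hf : IntegrableOn f (Ioi t)) (ht : 0 < t) :
    tailInvMoment f t ≤ tailMass f t / t := by
  rw [div_eq_inv_mul, tailMass, ← integral_const_mul]
  refine setIntegral_mono_on (integrableOn_Ioi_inv_mul hf ht) (hf.const_mul _) measurableSet_Ioi
    fun γ hγ => mul_le_mul_of_nonneg_right (inv_anti₀ ht (le_of_lt hγ)) (hnn γ)

theorem tailInvMoment_pos (hnn : ∀ x, 0 ≤ f x) (hf : IntegrableOn f (Ioi t)) (ht : 0 < t)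
    (hmass : 0 < tailMass f t) : 0 < tailInvMoment f t := by
  have hsupp : Function.support (fun γ => γ⁻¹ * f γ) ∩ Ioi t = Function.support f ∩ Ioi t := by
    ext γ
    simp only [mem_inter_iff, Function.mem_support, mem_Ioi, mul_ne_zero_iff, ne_eq, inv_eq_zero]
    constructor
    · exact fun h => ⟨h.1.2, h.2⟩
    · exact fun h => ⟨⟨(ht.trans h.2).ne', h.1⟩, h.2⟩
  rw [tailInvMoment, setIntegral_pos_iff_support_of_nonneg_ae _ (integrableOn_Ioi_inv_mul hf ht),
    hsupp, ← setIntegral_pos_iff_support_of_nonneg_ae _ hf]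
  · exact hmass
  · exact ae_of_all _ hnn
  · filter_upwards [ae_restrict_mem measurableSet_Ioi] with γ hγ
    exact mul_nonneg (inv_nonneg.2 (ht.trans hγ).le) (hnn γ)

theorem Gfun_nonneg (hnn : ∀ x, 0 ≤ f x) (ht : 0 < t) : 0 ≤ Gfun f t :=
  setIntegral_nonneg measurableSet_Ioi fun γ hγ =>
    mul_nonneg (sub_nonneg.2 (one_div_le_one_div_of_le ht (le_of_lt hγ))) (hnn γ)

theorem Ifun_nonneg (hnn : ∀ x, 0 ≤ f x) (ht : 0 < t) : 0 ≤ Ifun f t :=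
  setIntegral_nonneg measurableSet_Ioi fun γ hγ =>
    mul_nonneg (Real.log_nonneg ((one_le_div ht).2 (le_of_lt hγ))) (hnn γ)

theorem tendsto_Ifun_atTop_zero (hnn : ∀ x, 0 ≤ f x) (hint : IntegrableOn f (Ioi 0))
    (hlog : IntegrableOn (fun γ => Real.log γ * f γ) (Ioi 1)) :
    Tendsto (Ifun f) atTop (𝓝 0) := by
  refine tendsto_of_tendsto_of_tendsto_of_le_of_le' tendsto_const_nhds
    (tendsto_tailLogMoment_atTop_zero f) ?_ ?_
  · filter_upwards [eventually_gt_atTop 0] with t ht using Ifun_nonneg hnn ht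
  · filter_upwards [eventually_ge_atTop 1] with t ht
    rw [Ifun_eq_tailLogMoment_sub (hint.mono_set (Ioi_subset_Ioi (zero_le_one.trans ht)))
      (hlog.mono_set (Ioi_subset_Ioi ht)) (one_pos.trans_le ht)]
    exact sub_le_self _ (mul_nonneg (Real.log_nonneg ht) (tailMass_nonneg hnn))

theorem tendsto_mul_Gfun_atTop_zero (hnn : ∀ x, 0 ≤ f x) (hint : IntegrableOn f (Ioi 0)) :
    Tendsto (fun t => t * Gfun f t) atTop (𝓝 0) := by
  refine tendsto_of_tendsto_of_tendsto_of_le_of_le' tendsto_const_nhds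
    (tendsto_tailMass_atTop_zero f) ?_ ?_
  · filter_upwards [eventually_gt_atTop 0] with t ht using mul_nonneg ht.le (Gfun_nonneg hnn ht)
  · filter_upwards [eventually_gt_atTop 0] with t ht
    rw [mul_Gfun_eq_tailMass_sub (hint.mono_set (Ioi_subset_Ioi ht.le)) ht]
    exact sub_le_self _ (mul_nonneg ht.le (tailInvMoment_nonneg hnn ht.le))

theorem eventually_mul_Gfun_le_tailMass_div (hnn : ∀ x, 0 ≤ f x) (hint : IntegrableOn f (Ioi 0))
    (hcont : ContinuousOn f (Ioi 0)) {M : ℝ} (hM : 0 < M)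
    (hrate : ∀ᶠ t in atTop, M * tailMass f t ≤ t * f t) :
    ∀ᶠ t in atTop, t * Gfun f t ≤ tailMass f t / M := by
  obtain ⟨t₁, ht₁⟩ := eventually_atTop.1 (hrate.and (eventually_gt_atTop 0))
  set H : ℝ → ℝ := fun t => tailMass f t / M - t * Gfun f t with hH
  have hderiv : ∀ t, t₁ ≤ t → HasDerivAt H (-f t / M - -tailInvMoment f t) t := fun t ht =>
    ((hasDerivAt_tailMass hint hcont (ht₁ t ht).2).div_const M).sub
      (hasDerivAt_mul_Gfun hint hcont (ht₁ t ht).2)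
  have hanti : AntitoneOn H (Ici t₁) := by
    refine antitoneOn_of_hasDerivWithinAt_nonpos (f' := fun t => -f t / M - -tailInvMoment f t)
      (convex_Ici t₁)
      (fun t ht => (hderiv t ht).continuousAt.continuousWithinAt) (fun t ht => ?_) (fun t ht => ?_)
    · rw [interior_Ici] at ht
      exact (hderiv t ht.le).hasDerivWithinAt
    · rw [interior_Ici] at ht
      obtain ⟨hrate_t, ht0⟩ := ht₁ t ht.le
      have hB := tailInvMoment_le hnn (hint.mono_set (Ioi_subset_Ioi ht0.le)) ht0
      have hT : tailMass f t / t ≤ f t / M := by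
        rw [div_le_div_iff₀ ht0 hM]
        linarith
      rw [neg_div]
      linarith
  have hlim : Tendsto H atTop (𝓝 0) := by
    simpa using ((tendsto_tailMass_atTop_zero f).div_const M).sub
      (tendsto_mul_Gfun_atTop_zero hnn hint)
  filter_upwards [eventually_ge_atTop t₁] with t ht
  have hH0 : 0 ≤ H t := le_of_tendsto hlim <| by
    filter_upwards [eventually_ge_atTop t] with s hs using hanti ht (ht.trans hs) hs
  simpa [hH] using hH0

theorem tendsto_mul_Gfun_div_tailMass_atTop_zero (hnn : ∀ x, 0 ≤ f x)
    (hint : IntegrableOn f (Ioi 0)) (hcont : ContinuousOn f (Ioi 0))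
    (hmass : ∀ t > 0, 0 < tailMass f t)
    (hGFR : Tendsto (fun t => t * f t / tailMass f t) atTop atTop) :
    Tendsto (fun t => t * Gfun f t / tailMass f t) atTop (𝓝 0) := by
  refine tendsto_order.2 ⟨fun a ha => ?_, fun ε hε => ?_⟩
  · filter_upwards [eventually_gt_atTop 0] with t ht
    exact ha.trans_le (div_nonneg (mul_nonneg ht.le (Gfun_nonneg hnn ht)) (hmass t ht).le)
  · have hrate : ∀ᶠ t in atTop, 2 / ε * tailMass f t ≤ t * f t := by
      filter_upwards [hGFR.eventually_ge_atTop (2 / ε), eventually_gt_atTop 0] with t h ht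
      exact (le_div_iff₀ (hmass t ht)).1 h
    filter_upwards [eventually_mul_Gfun_le_tailMass_div hnn hint hcont (by positivity) hrate,
      eventually_gt_atTop 0] with t h ht
    rw [div_div_eq_mul_div] at h
    rw [div_lt_iff₀ (hmass t ht)]
    nlinarith [hmass t ht]

theorem tendsto_Ifun_div_mul_Gfun_atTop_one (hnn : ∀ x, 0 ≤ f x) (hint : IntegrableOn f (Ioi 0))
    (hcont : ContinuousOn f (Ioi 0)) (hlog : IntegrableOn (fun γ => Real.log γ * f γ) (Ioi 1))
    (hmass : ∀ t > 0, 0 < tailMass f t)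
    (hGFR : Tendsto (fun t => t * f t / tailMass f t) atTop atTop) :
    Tendsto (fun t => Ifun f t / (t * Gfun f t)) atTop (𝓝 1) := by
  have hratio : Tendsto (fun t => (1 - t * Gfun f t / tailMass f t)⁻¹) atTop (𝓝 1) := by
    simpa using ((tendsto_const_nhds (x := (1 : ℝ))).sub
      (tendsto_mul_Gfun_div_tailMass_atTop_zero hnn hint hcont hmass hGFR)).inv₀
      (by norm_num)
  have hB : ∀ t > 0, 0 < tailInvMoment f t := fun t ht =>
    tailInvMoment_pos hnn (hint.mono_set (Ioi_subset_Ioi ht.le)) ht (hmass t ht)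
  refine HasDerivAt.lhopital_zero_atTop (f' := fun t => -(tailMass f t / t))
    (g' := fun t => -tailInvMoment f t) ?_ ?_ ?_ (tendsto_Ifun_atTop_zero hnn hint hlog)
    (tendsto_mul_Gfun_atTop_zero hnn hint) (hratio.congr' ?_)
  · filter_upwards [eventually_gt_atTop 1] with t ht using hasDerivAt_Ifun_s9 hint hcont hlog ht
  · filter_upwards [eventually_gt_atTop 0] with t ht using hasDerivAt_mul_Gfun hint hcont ht
  · filter_upwards [eventually_gt_atTop 0] with t ht using neg_ne_zero.2 (hB t ht).ne'
  · filter_upwards [eventually_gt_atTop 0] with t ht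
    have hT := hmass t ht
    have hBt := hB t ht
    rw [mul_Gfun_eq_tailMass_sub (hint.mono_set (Ioi_subset_Ioi ht.le)) ht]
    field_simp
    ring

end TailIntegrals

theorem capacity_asymptotics_GFR_infinite_general (f : ℝ → ℝ)
    (hnn : ∀ x, 0 ≤ f x)
    (hcont : ContinuousOn f (Set.Ioi (0:ℝ)))
    (hint : IntegrableOn f (Set.Ioi (0:ℝ)))
    (hone : ∫ γ in Set.Ioi (0:ℝ), f γ = 1)
    (hsupp : ∀ t > (0:ℝ), Fcdf f t < 1)
    (hlog : IntegrableOn (fun γ => Real.log γ * f γ) (Set.Ioi (1:ℝ)))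
    (hGFR : Tendsto (fun t => t * f t / (1 - Fcdf f t)) atTop atTop) :
    Tendsto (fun lam => Ifun f lam / (lam * Gfun f lam)) atTop (nhds 1) := by
  have hmass : ∀ t > 0, tailMass f t = 1 - Fcdf f t := fun t ht =>
    tailMass_eq_one_sub_Fcdf hint hone (le_of_lt ht)
  refine tendsto_Ifun_div_mul_Gfun_atTop_one hnn hint hcont hlog
    (fun t ht => (hmass t ht).symm ▸ sub_pos.2 (hsupp t ht)) (hGFR.congr' ?_)
  filter_upwards [eventually_gt_atTop 0] with t ht
  rw [hmass t ht]

/-- Theorem 2 (capacity formula, `l = ∞` case): if the generalized failure rate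
tends to `∞`, then `I(λ)/(λ·G(λ)) → 1` as `λ → ∞`, i.e. the ergodic capacity
satisfies `C(P̄) ≈ λ(P̄)·P̄` at asymptotically low power. -/
theorem capacity_asymptotics_GFR_infinite (f : ℝ → ℝ)
    (hnn : ∀ x, 0 ≤ f x)
    (hzero : ∀ x ≤ (0:ℝ), f x = 0)
    (hcont : ContinuousOn f (Set.Ioi (0:ℝ)))
    (hint : IntegrableOn f (Set.Ioi (0:ℝ)))
    (hone : ∫ γ in Set.Ioi (0:ℝ), f γ = 1)
    (hsupp : ∀ t > (0:ℝ), Fcdf f t < 1)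
    (hlog : IntegrableOn (fun γ => Real.log γ * f γ) (Set.Ioi (1:ℝ)))
    (hGFR : Tendsto (fun t => t * f t / (1 - Fcdf f t)) atTop atTop) :
    Tendsto (fun lam => Ifun f lam / (lam * Gfun f lam)) atTop (nhds 1) :=
  capacity_asymptotics_GFR_infinite_general f hnn hcont hint hone hsupp hlog hGFR
end

section
/- Fix K ≥ 1 and an index k. For every vector λ = (λ₁,…,λ_K) of positive reals, the following two inequalities hold: ∏_{i≠k} F_i(λ_i) · ∫_{λ_k}^∞ (1/λ_k − 1/h) f_k(h) dh ≤ ∫_{λ_k}^∞ (1/λ_k − 1/h) · ∏_{i≠k} F_i((λ_i/λ_k)·h) · f_k(h) dh ≤ ∫_{λ_k}^∞ (1/λ_k − 1/h) f_k(h) dh. (Sandwich (E311)–(E313) comparing the multi-user power constraint integral G_k(λ) with the single-user one.) -/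
open MeasureTheory Filter Set Topology

/-! On `h > λ_k` every argument `λ_i h / λ_k` is at least `λ_i`, so by monotonicity and
boundedness of the CDFs the factor `P h = ∏_{i≠k} F_i(λ_i h / λ_k)` lies between
`∏_{i≠k} F_i(λ_i)` and `1`. Integrating against the nonnegative weight `(1/λ_k - 1/h) f_k(h)`
preserves both bounds. -/

section Sandwich

variable {α : Type*} [MeasurableSpace α] {μ : Measure α} {s : Set α} {g P : α → ℝ} {c : ℝ}

theorem setIntegral_mul_mem_Icc (hs : MeasurableSet s) (hg : IntegrableOn g s μ)
    (hg0 : ∀ x ∈ s, 0 ≤ g x) (hP : AEStronglyMeasurable P (μ.restrict s)) (hc : 0 ≤ c)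
    (hcP : ∀ x ∈ s, c ≤ P x) (hP1 : ∀ x ∈ s, P x ≤ 1) :
    ∫ x in s, P x * g x ∂μ ∈ Icc (c * ∫ x in s, g x ∂μ) (∫ x in s, g x ∂μ) := by
  have hPg : IntegrableOn (fun x => P x * g x) s μ := by
    refine hg.bdd_mul (c := 1) hP ((ae_restrict_iff' hs).2 (Eventually.of_forall fun x hx => ?_))
    rw [Real.norm_eq_abs, abs_le]
    exact ⟨by linarith [hcP x hx], hP1 x hx⟩
  rw [← integral_const_mul]
  constructor
  · exact setIntegral_mono_on (hg.const_mul c) hPg hs fun x hx =>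
      mul_le_mul_of_nonneg_right (hcP x hx) (hg0 x hx)
  · exact setIntegral_mono_on hPg hg hs fun x hx =>
      mul_le_of_le_one_left (hg0 x hx) (hP1 x hx)

end Sandwich

section Fcdf

variable {f : ℝ → ℝ}

theorem Fcdf_nonneg (hnn : ∀ x, 0 ≤ f x) {t : ℝ} (ht : 0 ≤ t) : 0 ≤ Fcdf f t :=
  intervalIntegral.integral_nonneg ht fun x _ => hnn x

theorem Fcdf_le_one (hnn : ∀ x, 0 ≤ f x) (hint : IntegrableOn f (Ioi 0))
    (hone : ∫ γ in Ioi (0:ℝ), f γ = 1) {t : ℝ} (ht : 0 ≤ t) : Fcdf f t ≤ 1 := by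
  rw [Fcdf, intervalIntegral.integral_of_le ht, ← hone]
  exact setIntegral_mono_set hint (Eventually.of_forall hnn)
    (Eventually.of_forall Ioc_subset_Ioi_self)

theorem intervalIntegrable_zero_of_integrableOn_Ioi_zero (hint : IntegrableOn f (Ioi 0)) {t : ℝ}
    (ht : 0 ≤ t) : IntervalIntegrable f volume 0 t :=
  (intervalIntegrable_iff_integrableOn_Ioc_of_le ht).2 (hint.mono_set Ioc_subset_Ioi_self)

theorem Fcdf_monotoneOn (hnn : ∀ x, 0 ≤ f x) (hint : IntegrableOn f (Ioi 0)) :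
    MonotoneOn (Fcdf f) (Ici 0) := by
  intro a ha b hb hab
  have hsplit : Fcdf f b = Fcdf f a + ∫ x in a..b, f x :=
    (intervalIntegral.integral_add_adjacent_intervals
      (intervalIntegrable_zero_of_integrableOn_Ioi_zero hint ha)
      ((intervalIntegrable_zero_of_integrableOn_Ioi_zero hint ha).symm.trans
        (intervalIntegrable_zero_of_integrableOn_Ioi_zero hint hb))).symm
  rw [hsplit]
  exact le_add_of_nonneg_right (intervalIntegral.integral_nonneg hab fun x _ => hnn x)

theorem Fcdf_continuousOn (hint : IntegrableOn f (Ioi 0)) : ContinuousOn (Fcdf f) (Ici 0) := by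
  intro t ht
  have hIcc : ContinuousOn (Fcdf f) (Icc 0 (t + 1)) := by
    have := intervalIntegral.continuousOn_primitive_interval' (b₁ := 0) (b₂ := t + 1)
      (intervalIntegrable_zero_of_integrableOn_Ioi_zero hint (by linarith [mem_Ici.1 ht]))
      left_mem_uIcc
    rwa [uIcc_of_le (by linarith [mem_Ici.1 ht])] at this
  refine (hIcc t ⟨ht, by linarith⟩).mono_of_mem_nhdsWithin ?_
  rw [← Ici_inter_Iic]
  exact inter_mem self_mem_nhdsWithin
    (mem_nhdsWithin_of_mem_nhds (Iic_mem_nhds (by linarith)))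

end Fcdf

section ProdFcdf

variable {ι : Type*} {s : Finset ι} {f : ι → ℝ → ℝ} {a b : ι → ℝ}

theorem prod_Fcdf_nonneg (hnn : ∀ i x, 0 ≤ f i x) (ha : ∀ i ∈ s, 0 ≤ a i) :
    0 ≤ ∏ i ∈ s, Fcdf (f i) (a i) :=
  Finset.prod_nonneg fun i hi => Fcdf_nonneg (hnn i) (ha i hi)

theorem prod_Fcdf_le_one (hnn : ∀ i x, 0 ≤ f i x) (hint : ∀ i, IntegrableOn (f i) (Ioi 0))
    (hone : ∀ i, ∫ γ in Ioi (0:ℝ), f i γ = 1) (ha : ∀ i ∈ s, 0 ≤ a i) :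
    ∏ i ∈ s, Fcdf (f i) (a i) ≤ 1 :=
  Finset.prod_le_one (fun i hi => Fcdf_nonneg (hnn i) (ha i hi))
    fun i hi => Fcdf_le_one (hnn i) (hint i) (hone i) (ha i hi)

theorem prod_Fcdf_le_prod_Fcdf (hnn : ∀ i x, 0 ≤ f i x) (hint : ∀ i, IntegrableOn (f i) (Ioi 0))
    (ha : ∀ i ∈ s, 0 ≤ a i) (hab : ∀ i ∈ s, a i ≤ b i) :
    ∏ i ∈ s, Fcdf (f i) (a i) ≤ ∏ i ∈ s, Fcdf (f i) (b i) :=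
  Finset.prod_le_prod (fun i hi => Fcdf_nonneg (hnn i) (ha i hi)) fun i hi =>
    Fcdf_monotoneOn (hnn i) (hint i) (ha i hi) ((ha i hi).trans (hab i hi)) (hab i hi)

end ProdFcdf

theorem integrableOn_Ioi_sub_inv_mul {f : ℝ → ℝ} (hint : IntegrableOn f (Ioi 0)) {a : ℝ}
    (ha : 0 < a) : IntegrableOn (fun h => (1 / a - 1 / h) * f h) (Ioi a) := by
  refine (hint.mono_set (Ioi_subset_Ioi ha.le)).bdd_mul (c := 1 / a) (by fun_prop)
    ((ae_restrict_iff' measurableSet_Ioi).2 (Eventually.of_forall fun h hh => ?_))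
  have hh0 : 0 < h := ha.trans hh
  rw [Real.norm_eq_abs, abs_le]
  constructor <;> linarith [one_div_le_one_div_of_le ha (le_of_lt hh), one_div_pos.2 hh0]

theorem mac_power_integral_sandwich_general (K : ℕ) (k : Fin K)
    (f : Fin K → ℝ → ℝ)
    (hnn : ∀ i x, 0 ≤ f i x)
    (hint : ∀ i, IntegrableOn (f i) (Set.Ioi (0:ℝ)))
    (hone : ∀ i, ∫ γ in Set.Ioi (0:ℝ), f i γ = 1)
    (lam : Fin K → ℝ) (hlam : ∀ i, 0 < lam i) :
    (∏ i ∈ Finset.univ.erase k, Fcdf (f i) (lam i)) *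
        ∫ h in Set.Ioi (lam k), (1 / lam k - 1 / h) * f k h ≤
      (∫ h in Set.Ioi (lam k),
        (1 / lam k - 1 / h) *
          (∏ i ∈ Finset.univ.erase k, Fcdf (f i) (lam i / lam k * h)) * f k h) ∧
    (∫ h in Set.Ioi (lam k),
        (1 / lam k - 1 / h) *
          (∏ i ∈ Finset.univ.erase k, Fcdf (f i) (lam i / lam k * h)) * f k h) ≤
      ∫ h in Set.Ioi (lam k), (1 / lam k - 1 / h) * f k h := by
  have hk := hlam k
  have harg : ∀ h ∈ Ioi (lam k), ∀ i, lam i ≤ lam i / lam k * h := fun h hh i => by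
    rw [div_mul_eq_mul_div, le_div_iff₀ hk]
    exact mul_le_mul_of_nonneg_left (le_of_lt hh) (hlam i).le
  have harg0 : ∀ h ∈ Ioi (lam k), ∀ i, 0 ≤ lam i / lam k * h := fun h hh i =>
    (hlam i).le.trans (harg h hh i)
  have hP : ContinuousOn (fun h => ∏ i ∈ Finset.univ.erase k, Fcdf (f i) (lam i / lam k * h))
      (Ioi (lam k)) :=
    continuousOn_finsetProd _ fun i _ => (Fcdf_continuousOn (hint i)).comp (by fun_prop)
      fun h hh => harg0 h hh i
  have hsandwich := setIntegral_mul_mem_Icc measurableSet_Ioi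
    (integrableOn_Ioi_sub_inv_mul (hint k) hk)
    (fun h hh => mul_nonneg (sub_nonneg.2 (one_div_le_one_div_of_le hk (le_of_lt hh))) (hnn k h))
    (hP.aestronglyMeasurable measurableSet_Ioi)
    (prod_Fcdf_nonneg hnn fun i _ => (hlam i).le)
    (fun h hh => prod_Fcdf_le_prod_Fcdf hnn hint (fun i _ => (hlam i).le) fun i _ => harg h hh i)
    (fun h hh => prod_Fcdf_le_one hnn hint hone fun i _ => harg0 h hh i)
  have hrw : ∀ h, (1 / lam k - 1 / h) *
      (∏ i ∈ Finset.univ.erase k, Fcdf (f i) (lam i / lam k * h)) * f k h =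
      (∏ i ∈ Finset.univ.erase k, Fcdf (f i) (lam i / lam k * h)) * ((1 / lam k - 1 / h) * f k h) :=
    fun h => by ring
  simpa only [hrw, mem_Icc] using hsandwich

/-- Sandwich (E311)–(E313): for positive Lagrange multipliers `λ₁,…,λ_K`, the
multi-user power integral `G_k(λ)` of (E307) is sandwiched between
`∏_{i≠k} F_i(λ_i)` times the single-user power integral and the single-user
power integral itself. -/
theorem mac_power_integral_sandwich (K : ℕ) (hK : 1 ≤ K) (k : Fin K)
    (f : Fin K → ℝ → ℝ)
    (hmeas : ∀ i, Measurable (f i))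
    (hnn : ∀ i x, 0 ≤ f i x)
    (hzero : ∀ i, ∀ x ≤ (0:ℝ), f i x = 0)
    (hint : ∀ i, IntegrableOn (f i) (Set.Ioi (0:ℝ)))
    (hone : ∀ i, ∫ γ in Set.Ioi (0:ℝ), f i γ = 1)
    (lam : Fin K → ℝ) (hlam : ∀ i, 0 < lam i) :
    (∏ i ∈ Finset.univ.erase k, Fcdf (f i) (lam i)) *
        ∫ h in Set.Ioi (lam k), (1 / lam k - 1 / h) * f k h ≤
      (∫ h in Set.Ioi (lam k),
        (1 / lam k - 1 / h) *
          (∏ i ∈ Finset.univ.erase k, Fcdf (f i) (lam i / lam k * h)) * f k h) ∧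
    (∫ h in Set.Ioi (lam k),
        (1 / lam k - 1 / h) *
          (∏ i ∈ Finset.univ.erase k, Fcdf (f i) (lam i / lam k * h)) * f k h) ≤
      ∫ h in Set.Ioi (lam k), (1 / lam k - 1 / h) * f k h :=
  mac_power_integral_sandwich_general K k f hnn hint hone lam hlam
end

section
/- For the exponential density f(x) = e^{−x} on (0,∞) (Rayleigh fading with unit mean channel power gain), the function G(λ) = ∫_λ^∞ (1/λ − 1/γ) e^{−γ} dγ satisfies (−log G(λ))/λ → 1 as λ → ∞. Equivalently, the water level λ(P̄) determined by G(λ(P̄)) = P̄ satisfies λ(P̄)/log(1/P̄) → 1 as P̄ → 0⁺; in particular λ(α·P̄) ≈ λ(P̄) for every fixed α ∈ (0,1], so time-sharing is asymptotically optimal for the broadcast channel with independent Rayleigh fading. (Example 1.) -/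
/-!
For `λ > 0` the weight `1/λ − 1/γ` lies in `[0, 1/λ]` on `(λ, ∞)` and is at least
`1/(λ(λ+1))` on `(λ+1, ∞)`, so `e^{−λ−1}/(λ(λ+1)) ≤ G(λ) ≤ e^{−λ}/λ`. Hence
`−log G(λ) = λ + O(log λ)`, i.e. `−log G(λ) ~ λ`. The lower bound also shows that
`G(λ) = P̄` forces `λ → ∞` as `P̄ → 0⁺` (for `λ ≤ 0` the integral diverges at `0` and
`G(λ) = 0`), so `λ(P̄) ~ −log G(λ(P̄)) = log (1/P̄)`; and `log (1/(αP̄)) ~ log (1/P̄)`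
since the two differ by a constant.
-/

open MeasureTheory Filter Set Topology

/-- The average-power function `G(λ) = ∫_λ^∞ (1/λ − 1/γ) e^{−γ} dγ` for the
exponential density (unit-mean Rayleigh fading). -/
noncomputable def Gexp (t : ℝ) : ℝ := ∫ γ in Set.Ioi t, (1 / t - 1 / γ) * Real.exp (-γ)

open Real Asymptotics

lemma integrableOn_Gexp_integrand {t : ℝ} (ht : 0 < t) :
    IntegrableOn (fun γ => (1 / t - 1 / γ) * exp (-γ)) (Ioi t) := by
  refine ((integrableOn_exp_neg_Ioi t).const_mul (1 / t)).mono' ?_ ?_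
  · refine ContinuousOn.aestronglyMeasurable ?_ measurableSet_Ioi
    exact (continuousOn_const.sub (continuousOn_const.div continuousOn_id
      fun γ hγ => (ht.trans hγ).ne')).mul (continuous_exp.comp continuous_neg).continuousOn
  · filter_upwards [ae_restrict_mem measurableSet_Ioi] with γ hγ
    have hγ0 : 0 < γ := ht.trans hγ
    have hw : 0 ≤ 1 / t - 1 / γ := sub_nonneg.2 (one_div_le_one_div_of_le ht hγ.le)
    rw [norm_mul, Real.norm_of_nonneg hw, Real.norm_of_nonneg (exp_pos _).le]
    gcongr
    exact sub_le_self _ (by positivity)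

lemma Gexp_le {t : ℝ} (ht : 0 < t) : Gexp t ≤ exp (-t) / t := by
  calc Gexp t ≤ ∫ γ in Ioi t, 1 / t * exp (-γ) := by
        refine setIntegral_mono_on (integrableOn_Gexp_integrand ht)
          ((integrableOn_exp_neg_Ioi t).const_mul _) measurableSet_Ioi fun γ hγ => ?_
        have hγ0 : 0 < γ := ht.trans hγ
        gcongr
        exact sub_le_self _ (by positivity)
    _ = exp (-t) / t := by rw [integral_const_mul, integral_exp_neg_Ioi]; ring

lemma le_Gexp {t : ℝ} (ht : 0 < t) : exp (-(t + 1)) / (t * (t + 1)) ≤ Gexp t := by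
  calc exp (-(t + 1)) / (t * (t + 1))
        = ∫ γ in Ioi (t + 1), (1 / t - 1 / (t + 1)) * exp (-γ) := by
          rw [integral_const_mul, integral_exp_neg_Ioi]
          field_simp
          ring
    _ ≤ ∫ γ in Ioi (t + 1), (1 / t - 1 / γ) * exp (-γ) := by
          refine setIntegral_mono_on ((integrableOn_exp_neg_Ioi _).const_mul _)
            ((integrableOn_Gexp_integrand ht).mono_set (Ioi_subset_Ioi (by linarith)))
            measurableSet_Ioi fun γ hγ => ?_
          gcongr
          exact le_of_lt hγ
    _ ≤ Gexp t := by
          refine setIntegral_mono_set (integrableOn_Gexp_integrand ht) ?_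
            (Ioi_subset_Ioi (by linarith)).eventuallyLE
          filter_upwards [ae_restrict_mem measurableSet_Ioi] with γ hγ
          have hw : 0 ≤ 1 / t - 1 / γ := sub_nonneg.2 (one_div_le_one_div_of_le ht (le_of_lt hγ))
          positivity

lemma Gexp_pos {t : ℝ} (ht : 0 < t) : 0 < Gexp t :=
  lt_of_lt_of_le (by positivity) (le_Gexp ht)

lemma not_integrableOn_Gexp_integrand {t : ℝ} (ht : t ≤ 0) (c : ℝ) :
    ¬ IntegrableOn (fun γ => (c - 1 / γ) * exp (-γ)) (Ioi t) := by
  intro h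
  have h01 : IntervalIntegrable (fun γ => (c - 1 / γ) * exp (-γ)) volume 0 1 :=
    (intervalIntegrable_iff_integrableOn_Ioc_of_le zero_le_one).2
      (h.mono_set fun γ hγ => ht.trans_lt hγ.1)
  have hinv : IntervalIntegrable (fun γ : ℝ => γ⁻¹) volume 0 1 := by
    convert intervalIntegrable_const.sub (h01.mul_continuousOn continuous_exp.continuousOn)
      using 1
    funext γ
    rw [mul_assoc, ← exp_add, neg_add_cancel, exp_zero]
    ring
  simp [intervalIntegrable_inv_iff] at hinv

lemma Gexp_of_nonpos {t : ℝ} (ht : t ≤ 0) : Gexp t = 0 :=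
  integral_undef (not_integrableOn_Gexp_integrand ht _)

lemma abs_neg_log_Gexp_sub_le {t : ℝ} (ht : 1 ≤ t) :
    |-log (Gexp t) - t| ≤ 2 * log t + (1 + log 2) := by
  have ht0 : 0 < t := one_pos.trans_le ht
  have hupper := log_le_log (Gexp_pos ht0) (Gexp_le ht0)
  have hlower := log_le_log (by positivity) (le_Gexp ht0)
  rw [log_div (exp_ne_zero _) ht0.ne', log_exp] at hupper
  rw [log_div (exp_ne_zero _) (by positivity), log_exp, log_mul ht0.ne' (by positivity)] at hlower
  have hlog_succ : log (t + 1) ≤ log 2 + log t := by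
    rw [← log_mul two_ne_zero ht0.ne']
    exact log_le_log (by positivity) (by linarith)
  have hlog_nonneg : 0 ≤ log t := log_nonneg ht
  rw [abs_le]
  constructor <;> linarith

lemma isEquivalent_neg_log_Gexp : (fun t => -log (Gexp t)) ~[atTop] id := by
  refine IsLittleO.isEquivalent (IsBigO.trans_isLittleO ?_
    ((isLittleO_log_id_atTop.const_mul_left 2).add (isLittleO_const_id_atTop (1 + log 2))))
  refine IsBigO.of_bound 1 ?_
  filter_upwards [eventually_ge_atTop 1] with t ht
  rw [one_mul, Pi.sub_apply, id, Real.norm_eq_abs,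
    Real.norm_of_nonneg (by have := log_nonneg ht; positivity)]
  exact abs_neg_log_Gexp_sub_le ht

lemma le_of_Gexp_lt {t C : ℝ} (hC : 0 < C) (hpos : 0 < Gexp t)
    (hlt : Gexp t < exp (-(C + 1)) / (C * (C + 1))) : C ≤ t := by
  by_contra! htC
  have ht0 : 0 < t := by
    by_contra! ht
    rw [Gexp_of_nonpos ht] at hpos
    exact hpos.false
  refine hlt.not_ge (le_trans ?_ (le_Gexp ht0))
  gcongr

lemma tendsto_atTop_of_Gexp_eq {lamhat : ℝ → ℝ}
    (h : ∀ᶠ P in 𝓝[>] (0 : ℝ), Gexp (lamhat P) = P) :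
    Tendsto lamhat (𝓝[>] 0) atTop := by
  refine tendsto_atTop.2 fun C => ?_
  have hC : 0 < max C 1 := lt_max_of_lt_right one_pos
  filter_upwards [h, Ioo_mem_nhdsGT (by positivity :
    0 < exp (-(max C 1 + 1)) / (max C 1 * (max C 1 + 1)))] with P hP hPsmall
  exact (le_max_left C 1).trans (le_of_Gexp_lt hC (hPsmall.1.trans_eq hP.symm)
    (hP.trans_lt hPsmall.2))

lemma isEquivalent_log_one_div_of_Gexp_eq {lamhat : ℝ → ℝ}
    (h : ∀ᶠ P in 𝓝[>] (0 : ℝ), Gexp (lamhat P) = P) :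
    lamhat ~[𝓝[>] 0] fun P => log (1 / P) :=
  (isEquivalent_neg_log_Gexp.comp_tendsto (tendsto_atTop_of_Gexp_eq h)).symm.congr_right
    (h.mono fun P hP => by simp only [Function.comp, hP, one_div, log_inv])

lemma tendsto_log_one_div_nhdsGT_zero :
    Tendsto (fun P : ℝ => log (1 / P)) (𝓝[>] 0) atTop := by
  simp only [one_div]
  exact tendsto_log_atTop.comp tendsto_inv_nhdsGT_zero

lemma isEquivalent_log_one_div_mul {α : ℝ} (hα : 0 < α) :
    (fun P => log (1 / (α * P))) ~[𝓝[>] 0] fun P => log (1 / P) := by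
  refine (IsEquivalent.refl.const_add_of_norm_tendsto_atTop (c := log (1 / α))
    (tendsto_norm_atTop_atTop.comp tendsto_log_one_div_nhdsGT_zero)).congr_left ?_
  filter_upwards [self_mem_nhdsWithin] with P (hP : 0 < P)
  rw [← log_mul (by positivity) (by positivity), one_div_mul_one_div]

/-- Example 1 (Rayleigh fading): `(−log G(λ))/λ → 1` as `λ → ∞`; equivalently, any
water level `λ̂(P̄)` with `G(λ̂(P̄)) = P̄` satisfies `λ̂(P̄)/log(1/P̄) → 1` as `P̄ → 0⁺`,
and in particular `λ̂(α·P̄) ≈ λ̂(P̄)` for every fixed `α ∈ (0,1]`, so time-sharing is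
asymptotically optimal for the broadcast channel with independent Rayleigh fading. -/
theorem rayleigh_waterlevel_asymptotics :
    Tendsto (fun lam => -Real.log (Gexp lam) / lam) atTop (nhds 1) ∧
      ∀ lamhat : ℝ → ℝ,
        (∀ᶠ P in 𝓝[>] (0:ℝ), Gexp (lamhat P) = P) →
          Tendsto (fun P => lamhat P / Real.log (1 / P)) (𝓝[>] (0:ℝ)) (nhds 1) ∧
          ∀ α ∈ Set.Ioc (0:ℝ) 1,
            Tendsto (fun P => lamhat (α * P) / lamhat P) (𝓝[>] (0:ℝ)) (nhds 1) := by
  refine ⟨(isEquivalent_iff_tendsto_one (eventually_ne_atTop 0)).1 isEquivalent_neg_log_Gexp,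
    fun lamhat h => ?_⟩
  have hlam := isEquivalent_log_one_div_of_Gexp_eq h
  refine ⟨(isEquivalent_iff_tendsto_one
    (tendsto_log_one_div_nhdsGT_zero.eventually_ne_atTop 0)).1 hlam, fun α hα => ?_⟩
  have hscale : Tendsto (α * ·) (𝓝[>] (0 : ℝ)) (𝓝[>] 0) :=
    tendsto_iff_comap.2 (comap_mulLeft_nhdsGT_zero hα.1).ge
  have hshift : (fun P => lamhat (α * P)) ~[𝓝[>] 0] lamhat :=
    ((hlam.comp_tendsto hscale).trans (isEquivalent_log_one_div_mul hα.1)).trans hlam.symm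
  exact (isEquivalent_iff_tendsto_one
    ((tendsto_atTop_of_Gexp_eq h).eventually_ne_atTop 0)).1 hshift
end

section
/- For the log-logistic density f(x) = 1/(1+x)² on (0,∞), with cumulative distribution F(t) = t/(1+t): (a) the generalized failure rate satisfies t·f(t)/(1 − F(t)) → 1 as t → ∞ (so l = 1); (b) the function G(λ) = ∫_λ^∞ (1/λ − 1/γ)/(1+γ)² dγ satisfies λ²·G(λ) → 1/2 as λ → ∞. Consequently, any function λ̂(P̄) satisfying G(λ̂(P̄)) = P̄ for all sufficiently small P̄ > 0 obeys λ̂(α·P̄)/λ̂(P̄) → α^{−1/2} as P̄ → 0⁺ for each fixed α ∈ (0,1); since this limit differs from 1, time-sharing is strictly suboptimal for the broadcast channel with i.i.d. log-logistic fading. (Example 2.) -/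
/-!
For `t > 0` the integral has the closed form `G(t) = φ(1/t)` with `φ(x) = x − log(1 + x)`.
Since `φ(x) = x²/2 + O(x³)` at `0`, `t²·G(t) → 1/2`. As `φ` is positive and increasing on
`(0, ∞)`, `G` is positive and decreasing there, so a right inverse `λ̂` of `G` tends to `∞`
as `P → 0⁺`; then both `λ̂(P)²·P` and `λ̂(αP)²·αP` tend to `1/2`, and their quotient gives
`(λ̂(αP)/λ̂(P))² → 1/α`.
-/

open MeasureTheory Filter Set Topology

/-- The average-power function `G(λ) = ∫_λ^∞ (1/λ − 1/γ)/(1+γ)² dγ` for the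
log-logistic density `f(x) = 1/(1+x)²`. -/
noncomputable def Gll (t : ℝ) : ℝ := ∫ γ in Set.Ioi t, (1 / t - 1 / γ) * (1 / (1 + γ) ^ 2)

open Real

lemma sub_log_one_add_pos {x : ℝ} (hx : -1 < x) (hx0 : x ≠ 0) : 0 < x - log (1 + x) := by
  have := log_lt_sub_one_of_pos (by linarith : 0 < 1 + x) (by contrapose! hx0; linarith)
  linarith

lemma monotoneOn_sub_log_one_add : MonotoneOn (fun x : ℝ => x - log (1 + x)) (Ici 0) := by
  intro x (hx : 0 ≤ x) y _ hxy
  have h1x : 0 < 1 + x := by linarith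
  have hlog : log (1 + y) - log (1 + x) ≤ (y - x) / (1 + x) := by
    rw [← log_div (by linarith) h1x.ne']
    calc log ((1 + y) / (1 + x)) ≤ (1 + y) / (1 + x) - 1 :=
          log_le_sub_one_of_pos (div_pos (by linarith) h1x)
      _ = (y - x) / (1 + x) := by field_simp; ring
  have : (y - x) / (1 + x) ≤ y - x := div_le_self (sub_nonneg.2 hxy) (by linarith)
  dsimp only
  linarith

lemma abs_sub_log_one_add_div_sq_sub_half_le {x : ℝ} (hx : |x| < 1) (hx0 : x ≠ 0) :
    |(x - log (1 + x)) / x ^ 2 - 1 / 2| ≤ |x| / (1 - |x|) := by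
  have h : |-x + x ^ 2 / 2 + log (1 + x)| ≤ |x| ^ 3 / (1 - |x|) := by
    have := abs_log_sub_add_sum_range_le (x := -x) (by rwa [abs_neg]) 2
    norm_num [Finset.sum_range_succ] at this
    exact this
  have hx2 : 0 < |x| ^ 2 := by positivity
  have : (x - log (1 + x)) / x ^ 2 - 1 / 2 = -(-x + x ^ 2 / 2 + log (1 + x)) / |x| ^ 2 := by
    rw [sq_abs]; field_simp; ring
  rw [this, abs_div, abs_neg, abs_of_pos hx2, div_le_iff₀ hx2]
  calc _ ≤ |x| ^ 3 / (1 - |x|) := h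
    _ = |x| / (1 - |x|) * |x| ^ 2 := by ring

lemma tendsto_sub_log_one_add_div_sq :
    Tendsto (fun x : ℝ => (x - log (1 + x)) / x ^ 2) (𝓝[≠] 0) (𝓝 (1 / 2)) := by
  have habs : Tendsto (fun x : ℝ => |x|) (𝓝 0) (𝓝 0) := by
    simpa using continuous_abs.tendsto (0 : ℝ)
  have hbound : Tendsto (fun x : ℝ => |x| / (1 - |x|)) (𝓝 0) (𝓝 0) := by
    have : ContinuousAt (fun x : ℝ => |x| / (1 - |x|)) 0 := by fun_prop (disch := norm_num)
    simpa using this.tendsto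
  rw [tendsto_iff_norm_sub_tendsto_zero]
  refine squeeze_zero' (.of_forall fun _ => norm_nonneg _) ?_ (hbound.mono_left nhdsWithin_le_nhds)
  filter_upwards [self_mem_nhdsWithin, nhdsWithin_le_nhds (habs.eventually_lt_const zero_lt_one)]
    with x hx0 hx
  exact abs_sub_log_one_add_div_sq_sub_half_le hx hx0

-- Partial fractions: `1/(γ(1+γ)²) = 1/γ − 1/(1+γ) − 1/(1+γ)²`.
lemma hasDerivAt_Gll_primitive {t γ : ℝ} (hγ : 0 < γ) :
    HasDerivAt (fun x => log (x + 1) - log x - (1 + 1 / t) / (1 + x))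
      ((1 / t - 1 / γ) * (1 / (1 + γ) ^ 2)) γ := by
  have h1 : 1 + γ ≠ 0 := by positivity
  have := ((((hasDerivAt_id γ).add_const 1).log (by positivity)).sub
    (hasDerivAt_log hγ.ne')).sub
    ((hasDerivAt_const γ (1 + 1 / t)).div ((hasDerivAt_id γ).const_add 1) h1)
  refine this.congr_deriv ?_
  simp only [id]
  field_simp
  ring

lemma Gll_eq_sub_log {t : ℝ} (ht : 0 < t) : Gll t = 1 / t - log (1 + 1 / t) := by
  have hlim : Tendsto (fun γ => log (γ + 1) - log γ - (1 + 1 / t) / (1 + γ)) atTop (𝓝 0) := by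
    simpa using (tendsto_log_comp_add_sub_log 1).sub
      (tendsto_const_nhds.div_atTop (tendsto_atTop_add_const_left _ 1 tendsto_id))
  have hint := integral_Ioi_of_hasDerivAt_of_nonneg
    (hasDerivAt_Gll_primitive ht).continuousAt.continuousWithinAt
    (fun γ hγ => hasDerivAt_Gll_primitive (ht.trans hγ))
    (fun γ (hγ : t < γ) => mul_nonneg
      (sub_nonneg.2 (one_div_le_one_div_of_le ht hγ.le)) (by positivity)) hlim
  rw [Gll, hint, ← log_div (by positivity) ht.ne']
  field_simp
  ring

-- For `t ≤ 0` the integrand is at most `-1/(4γ)` near `0⁺`, hence not integrable, and the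
-- Bochner integral takes its junk value `0`.
lemma Gll_of_nonpos {t : ℝ} (ht : t ≤ 0) : Gll t = 0 := by
  refine integral_undef fun hint => ?_
  have hint' : IntegrableOn (fun γ : ℝ => (1 / t - 1 / γ) * (1 / (1 + γ) ^ 2)) (Ioo 0 1) :=
    IntegrableOn.mono_set hint fun γ hγ => ht.trans_lt hγ.1
  have hinv : IntegrableOn (fun γ : ℝ => γ⁻¹) (Ioo 0 1) := by
    refine (hint'.const_mul (-4)).mono' (by fun_prop) ?_
    filter_upwards [ae_restrict_mem measurableSet_Ioo] with γ ⟨hγ0, hγ1⟩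
    have hγ' : 1 / 4 ≤ 1 / (1 + γ) ^ 2 := by
      rw [div_le_div_iff₀ (by norm_num) (by positivity)]; nlinarith
    rw [norm_inv, Real.norm_of_nonneg hγ0.le]
    calc γ⁻¹ = 4 * (1 / γ) * (1 / 4) := by ring
      _ ≤ 4 * (1 / γ - 1 / t) * (1 / (1 + γ) ^ 2) := by
        have := one_div_nonpos.2 ht
        have := one_div_pos.2 hγ0
        gcongr <;> linarith
      _ = -4 * ((1 / t - 1 / γ) * (1 / (1 + γ) ^ 2)) := by ring
  have := (intervalIntegrable_iff_integrableOn_Ioo_of_le zero_le_one).2 hinv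
  simp at this

lemma Gll_pos {t : ℝ} (ht : 0 < t) : 0 < Gll t := by
  rw [Gll_eq_sub_log ht]
  exact sub_log_one_add_pos (by linarith [one_div_pos.2 ht]) (one_div_pos.2 ht).ne'

lemma antitoneOn_Gll : AntitoneOn Gll (Ioi 0) := by
  intro s (hs : 0 < s) t (ht : 0 < t) hst
  rw [Gll_eq_sub_log hs, Gll_eq_sub_log ht]
  exact monotoneOn_sub_log_one_add (one_div_pos.2 ht).le (one_div_pos.2 hs).le
    (one_div_le_one_div_of_le hs hst)

lemma tendsto_sq_mul_Gll : Tendsto (fun t : ℝ => t ^ 2 * Gll t) atTop (𝓝 (1 / 2)) := by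
  refine (tendsto_sub_log_one_add_div_sq.comp
    (tendsto_inv_atTop_nhdsGT_zero.mono_right (nhdsGT_le_nhdsNE 0))).congr' ?_
  filter_upwards [eventually_gt_atTop 0] with t ht
  rw [Function.comp_apply, Gll_eq_sub_log ht, one_div, inv_pow, div_inv_eq_mul, mul_comm]

section RightInverse

variable {g w : ℝ → ℝ}

lemma tendsto_atTop_of_eventually_apply_eq (hnonpos : ∀ t ≤ 0, g t ≤ 0)
    (hpos : ∀ t, 0 < t → 0 < g t) (hanti : AntitoneOn g (Ioi 0))
    (hw : ∀ᶠ P in 𝓝[>] 0, g (w P) = P) : Tendsto w (𝓝[>] 0) atTop := by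
  refine tendsto_atTop.2 fun M => ?_
  have hM : 0 < max M 1 := lt_max_of_lt_right one_pos
  filter_upwards [hw, self_mem_nhdsWithin,
    nhdsWithin_le_nhds (eventually_lt_nhds (hpos _ hM))] with P hgP (hP : 0 < P) hPM
  by_contra! hlt
  rcases le_or_gt (w P) 0 with hw0 | hw0
  · linarith [hnonpos _ hw0]
  · linarith [hanti hw0 hM (hlt.le.trans (le_max_left M 1))]

lemma tendsto_div_of_tendsto_rpow_mul {p c α : ℝ} (hp : p ≠ 0) (hc : c ≠ 0) (hα : 0 < α)
    (hg : Tendsto (fun t => t ^ p * g t) atTop (𝓝 c)) (hw : Tendsto w (𝓝[>] 0) atTop)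
    (hgw : ∀ᶠ P in 𝓝[>] 0, g (w P) = P) :
    Tendsto (fun P => w (α * P) / w P) (𝓝[>] 0) (𝓝 (α ^ (-1 / p))) := by
  have hmul : Tendsto (α * ·) (𝓝[>] (0 : ℝ)) (𝓝[>] 0) := by
    simpa only [comap_mulLeft_nhdsGT_zero hα] using tendsto_comap (f := (α * ·)) (x := 𝓝[>] 0)
  have hA : Tendsto (fun P => w P ^ p * P) (𝓝[>] 0) (𝓝 c) :=
    (hg.comp hw).congr' (hgw.mono fun P h => by rw [Function.comp_apply, h])
  have hpow : Tendsto (fun P => (w (α * P) / w P) ^ p) (𝓝[>] 0) (𝓝 α⁻¹) := by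
    have := ((hA.comp hmul).div hA hc).div_const α
    rw [div_self hc, one_div] at this
    refine this.congr' ?_
    filter_upwards [self_mem_nhdsWithin, hw.eventually_gt_atTop 0,
      hmul.eventually (hw.eventually_gt_atTop 0)] with P (hP : 0 < P) hwP hwαP
    simp only [Function.comp_apply, Pi.div_apply]
    rw [div_rpow hwαP.le hwP.le]
    field_simp
  have hroot := hpow.rpow_const (p := p⁻¹) (.inl (inv_ne_zero hα.ne'))
  rw [inv_rpow hα.le] at hroot
  rw [show -1 / p = -p⁻¹ by ring, rpow_neg hα.le]
  refine hroot.congr' ?_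
  filter_upwards [hw.eventually_gt_atTop 0, hmul.eventually (hw.eventually_gt_atTop 0)]
    with P hwP hwαP
  exact rpow_rpow_inv (div_pos hwαP hwP).le hp

end RightInverse

lemma tendsto_loglogistic_failureRate :
    Tendsto (fun t : ℝ => t * (1 / (1 + t) ^ 2) / (1 - t / (1 + t))) atTop (𝓝 1) := by
  have h : Tendsto (fun t : ℝ => 1 - 1 / (1 + t)) atTop (𝓝 (1 - 0)) := tendsto_const_nhds.sub
    (tendsto_const_nhds.div_atTop (tendsto_atTop_add_const_left _ 1 tendsto_id))
  rw [sub_zero] at h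
  refine h.congr' ?_
  filter_upwards [eventually_gt_atTop 0] with t ht
  field_simp
  ring

/-- Example 2 (log-logistic fading): (a) the generalized failure rate tends to `1`;
(b) `λ²·G(λ) → 1/2` as `λ → ∞`; consequently any water level `λ̂(P̄)` with
`G(λ̂(P̄)) = P̄` for small `P̄ > 0` obeys `λ̂(α·P̄)/λ̂(P̄) → α^{−1/2} ≠ 1` as `P̄ → 0⁺`,
so time-sharing is strictly suboptimal for this broadcast fading channel. -/
theorem loglogistic_waterlevel_asymptotics :
    Tendsto (fun t : ℝ => t * (1 / (1 + t) ^ 2) / (1 - t / (1 + t))) atTop (nhds 1) ∧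
    Tendsto (fun lam : ℝ => lam ^ 2 * Gll lam) atTop (nhds (1 / 2)) ∧
      ∀ lamhat : ℝ → ℝ,
        (∀ᶠ P in 𝓝[>] (0:ℝ), Gll (lamhat P) = P) →
          ∀ α ∈ Set.Ioo (0:ℝ) 1,
            Tendsto (fun P => lamhat (α * P) / lamhat P) (𝓝[>] (0:ℝ))
                (nhds (α ^ (-(1:ℝ) / 2))) ∧
              α ^ (-(1:ℝ) / 2) ≠ 1 := by
  refine ⟨tendsto_loglogistic_failureRate, tendsto_sq_mul_Gll,
    fun lamhat hGll α hα => ⟨?_, ?_⟩⟩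
  · have hlamhat := tendsto_atTop_of_eventually_apply_eq (fun t ht => (Gll_of_nonpos ht).le)
      (fun t => Gll_pos) antitoneOn_Gll hGll
    refine tendsto_div_of_tendsto_rpow_mul two_ne_zero one_half_pos.ne' hα.1 ?_ hlamhat hGll
    simpa only [rpow_two] using tendsto_sq_mul_Gll
  · exact (one_lt_rpow_of_pos_of_lt_one_of_neg hα.1 hα.2 (by norm_num)).ne'
end

section
/- Let g : (0,∞) → (0,∞) be a nonincreasing function that is integrable on (0,1), and fix α ∈ (0,1). If g(α·P)/g(P) → 1 as P → 0⁺, then (∫₀^{αP} g(t) dt)/(α·∫₀^P g(t) dt) → 1 as P → 0⁺. Applied with g = G_k⁻¹ (the inverse water level function of user k), this gives C_k(α·P̄) ≈ α·C_k(P̄), i.e. the condition λ_k(α·P̄) ≈ λ_k(P̄) of (E5A04) implies that time-sharing asymptotically achieves the boundary of the broadcast channel capacity region. (Sufficiency direction of the time-sharing optimality criterion (E5A03)–(E5A04).) -/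
open MeasureTheory Filter Set Topology

/-!
Substituting `t = α s` turns `∫₀^{αP} g` into `α ∫₀^P g(α s) ds`, so the claim is that
`∫₀^P g(α·) / ∫₀^P g → 1`. Near `0` the integrands satisfy `|g(α s) - g(s)| ≤ ε g(s)`, and
integrating this pointwise bound over `(0, P]` bounds the ratio of the integrals within `ε` of `1`.
-/

section RatioOfIntegrals

variable {u v : ℝ → ℝ} {a P L ε : ℝ}

theorem abs_integral_sub_mul_integral_le (haP : a ≤ P)
    (hu : IntervalIntegrable u volume a P) (hv : IntervalIntegrable v volume a P)
    (h : ∀ x ∈ Ioc a P, |u x - L * v x| ≤ ε * v x) :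
    |(∫ t in a..P, u t) - L * ∫ t in a..P, v t| ≤ ε * ∫ t in a..P, v t := by
  rw [← intervalIntegral.integral_const_mul, ← intervalIntegral.integral_sub hu (hv.const_mul L),
    ← intervalIntegral.integral_const_mul]
  exact intervalIntegral.norm_integral_le_of_norm_le (f := fun t ↦ u t - L * v t) haP
    (ae_of_all _ h) (hv.const_mul ε)

theorem abs_integral_div_integral_sub_le (haP : a < P)
    (hu : IntervalIntegrable u volume a P) (hv : IntervalIntegrable v volume a P)
    (hvpos : ∀ x ∈ Ioc a P, 0 < v x) (h : ∀ x ∈ Ioc a P, |u x / v x - L| ≤ ε) :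
    |(∫ t in a..P, u t) / (∫ t in a..P, v t) - L| ≤ ε := by
  have hint : 0 < ∫ t in a..P, v t :=
    intervalIntegral.intervalIntegral_pos_of_pos_on hv
      (fun x hx ↦ hvpos x (Ioo_subset_Ioc_self hx)) haP
  have hpointwise : ∀ x ∈ Ioc a P, |u x - L * v x| ≤ ε * v x := fun x hx ↦ by
    have hvx := hvpos x hx
    have hfactor : u x - L * v x = (u x / v x - L) * v x := by field_simp
    rw [hfactor, abs_mul, abs_of_pos hvx]
    exact mul_le_mul_of_nonneg_right (h x hx) hvx.le
  rw [← mul_div_cancel_right₀ L hint.ne', ← sub_div, abs_div, abs_of_pos hint, div_le_iff₀ hint]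
  exact abs_integral_sub_mul_integral_le haP.le hu hv hpointwise

theorem tendsto_integral_div_integral_of_tendsto_div
    (hvpos : ∀ᶠ x in 𝓝[>] a, 0 < v x)
    (hu : ∀ᶠ P in 𝓝[>] a, IntervalIntegrable u volume a P)
    (hv : ∀ᶠ P in 𝓝[>] a, IntervalIntegrable v volume a P)
    (h : Tendsto (fun x ↦ u x / v x) (𝓝[>] a) (𝓝 L)) :
    Tendsto (fun P ↦ (∫ t in a..P, u t) / ∫ t in a..P, v t) (𝓝[>] a) (𝓝 L) := by
  rw [Metric.tendsto_nhds]
  intro ε hε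
  have hclose : ∀ᶠ x in 𝓝[>] a, 0 < v x ∧ |u x / v x - L| ≤ ε / 2 :=
    hvpos.and ((Metric.tendsto_nhds.mp h (ε / 2) (half_pos hε)).mono fun x hx ↦ hx.le)
  obtain ⟨b, hab, hb⟩ := (nhdsGT_basis a).eventually_iff.mp hclose
  filter_upwards [hu, hv, Ioo_mem_nhdsGT hab] with P huP hvP hP
  have hsub : Ioc a P ⊆ Ioo a b := Ioc_subset_Ioo_right hP.2
  refine lt_of_le_of_lt ?_ (half_lt_self hε)
  exact abs_integral_div_integral_sub_le hP.1 huP hvP (fun x hx ↦ (hb (hsub hx)).1)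
    (fun x hx ↦ (hb (hsub hx)).2)

end RatioOfIntegrals

theorem timesharing_sufficiency_general (g : ℝ → ℝ) (α : ℝ)
    (hα : α ∈ Set.Ioo (0:ℝ) 1)
    (hgpos : ∀ x ∈ Set.Ioi (0:ℝ), 0 < g x)
    (hgint : IntegrableOn g (Set.Ioo (0:ℝ) 1))
    (hratio : Tendsto (fun P => g (α * P) / g P) (𝓝[>] (0:ℝ)) (nhds 1)) :
    Tendsto
      (fun P => (∫ t in (0:ℝ)..(α * P), g t) / (α * ∫ t in (0:ℝ)..P, g t))
      (𝓝[>] (0:ℝ)) (nhds 1) := by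
  obtain ⟨hα0, hα1⟩ := hα
  have hg : ∀ P ∈ Icc (0:ℝ) 1, IntervalIntegrable g volume 0 P := fun P hP ↦
    ((intervalIntegrable_iff_integrableOn_Ioo_of_le zero_le_one).mpr hgint).mono_set
      (by rw [uIcc_of_le hP.1, uIcc_of_le zero_le_one]; exact Icc_subset_Icc_right hP.2)
  have hsmall : ∀ᶠ P in 𝓝[>] (0:ℝ), P ∈ Ioo (0:ℝ) 1 := Ioo_mem_nhdsGT one_pos
  have hgα : ∀ᶠ P in 𝓝[>] (0:ℝ), IntervalIntegrable (fun s ↦ g (α * s)) volume 0 P :=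
    hsmall.mono fun P hP ↦ by
      have hαP : α * P ∈ Icc (0:ℝ) 1 := ⟨by nlinarith [hP.1], by nlinarith [hP.2]⟩
      have := (hg (α * P) hαP).comp_mul_left (c := α)
      rwa [zero_div, mul_div_cancel_left₀ _ hα0.ne'] at this
  have hlim := tendsto_integral_div_integral_of_tendsto_div
    (eventually_mem_nhdsWithin.mono hgpos) hgα (hsmall.mono fun P hP ↦ hg P (Ioo_subset_Icc_self hP))
    hratio
  refine hlim.congr' (Eventually.of_forall fun P ↦ ?_)
  rw [intervalIntegral.integral_comp_mul_left _ hα0.ne', mul_zero, smul_eq_mul,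
    ← mul_div_mul_left _ _ hα0.ne', mul_inv_cancel_left₀ hα0.ne']

/-- Sufficiency direction of the time-sharing optimality criterion
(E5A03)–(E5A04): if `g = G_k⁻¹` is positive, nonincreasing on `(0,∞)`, integrable
on `(0,1)`, and satisfies `g(α·P)/g(P) → 1` as `P → 0⁺`, then
`(∫₀^{αP} g)/(α·∫₀^P g) → 1` as `P → 0⁺`, i.e. `C_k(α·P̄) ≈ α·C_k(P̄)` and
time-sharing asymptotically achieves the broadcast capacity boundary. -/
theorem timesharing_sufficiency (g : ℝ → ℝ) (α : ℝ)
    (hα : α ∈ Set.Ioo (0:ℝ) 1)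
    (hgpos : ∀ x ∈ Set.Ioi (0:ℝ), 0 < g x)
    (hganti : AntitoneOn g (Set.Ioi (0:ℝ)))
    (hgint : IntegrableOn g (Set.Ioo (0:ℝ) 1))
    (hratio : Tendsto (fun P => g (α * P) / g P) (𝓝[>] (0:ℝ)) (nhds 1)) :
    Tendsto
      (fun P => (∫ t in (0:ℝ)..(α * P), g t) / (α * ∫ t in (0:ℝ)..P, g t))
      (𝓝[>] (0:ℝ)) (nhds 1) :=
  timesharing_sufficiency_general g α hα hgpos hgint hratio
end
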